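/- arXiv:2406.02402 — 11 statements merged into one kernel-verified Lean document; each statement's English description precedes it below -/
import Mathlib

section
/- Suppose the B units are indexed so that T_1 ≤ T_2 ≤ ... ≤ T_B (the hindsight optimal ordering) and the sample path is offset-expiring, i.e., P_{<t}/B ≤ N_{<t}/N for every t ∈ {2,...,T}. Then the static proportional allocation B/N is feasible under the hindsight optimal ordering: the process that in each round t allocates total quantity (B/N)·N_t from the remaining stock, exhausting units in increasing order of perishing time, never lets any unallocated quantity spoil, never runs out of stock, and has allocated the entire budget B by the end of round T. -/
open Finset

/-- Remaining quantity of unit `b` after allocating a total amount `A` from the stock `q`,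
exhausting units in increasing `rank` order (lower-ranked remaining units are fully depleted
before drawing from higher-ranked ones). -/
noncomputable def allocRemain {ι : Type*} [Fintype ι] (rank : ι → ℕ) (q : ι → ℝ) (A : ℝ)
    (b : ι) : ℝ :=
  q b - min (q b) (max 0 (A - ∑ b' ∈ Finset.univ.filter (fun b' => rank b' < rank b), q b'))

/-- State of the ordered allocation dynamics: `stockState rank Tb A t b` is the remaining
quantity of unit `b` at the start of round `t` (each unit starts with quantity `1`; in round
`t` the total amount `A t` is allocated in increasing `rank` order, capped by the available
stock, and then the remaining quantity of every unit `b` with perishing time `Tb b = t`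
spoils). Rounds are `1`-indexed and it is assumed that `A 0 = 0` and `Tb b ≥ 1`, so that
`stockState rank Tb A 1 b = 1`. -/
noncomputable def stockState {ι : Type*} [Fintype ι] (rank : ι → ℕ) (Tb : ι → ℕ)
    (A : ℕ → ℝ) : ℕ → ι → ℝ
  | 0 => fun _ => 1
  | t + 1 => fun b =>
      if Tb b = t then 0
      else allocRemain rank (stockState rank Tb A t) (A t) b


lemma clamp_sum (S : ℝ) (hS : 0 ≤ S) (k : ℕ) :
    ∑ i ∈ Finset.range k, min 1 (max 0 (S - i)) = min S k := by
  induction k with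
  | zero => simp [min_eq_right hS]
  | succ k ih =>
    rw [Finset.sum_range_succ, ih]
    push_cast
    rcases le_total S k with h | h <;> rcases le_total S (k + 1 : ℝ) with h' | h' <;>
      simp [min_def, max_def] <;> split_ifs <;> linarith

lemma sum_filter_val_lt {B : ℕ} (F : ℕ → ℝ) (k : ℕ) (hk : k ≤ B) :
    ∑ b' ∈ Finset.univ.filter (fun b' : Fin B => (b' : ℕ) < k), F (b' : ℕ)
      = ∑ i ∈ Finset.range k, F i := by
  rw [Finset.sum_filter, Fin.sum_univ_eq_sum_range (fun i => if i < k then F i else 0),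
    ← Finset.sum_filter]
  congr 1
  ext i
  simp only [Finset.mem_filter, Finset.mem_range]
  omega

set_option maxHeartbeats 1600000 in
lemma alloc_step {B : ℕ} (S0 A : ℝ) (hS0 : 0 ≤ S0) (hA : 0 ≤ A) (b : Fin B) :
    allocRemain (fun b : Fin B => (b : ℕ))
      (fun b' : Fin B => 1 - min 1 (max 0 (S0 - (b' : ℕ)))) A b
      = 1 - min 1 (max 0 (S0 + A - (b : ℕ))) := by
  unfold allocRemain
  have hsum : ∑ b' ∈ Finset.univ.filter (fun b' : Fin B => (b' : ℕ) < (b : ℕ)),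
      (1 - min 1 (max 0 (S0 - (b' : ℕ)))) = (b : ℕ) - min S0 (b : ℕ) := by
    rw [sum_filter_val_lt (fun i => 1 - min 1 (max 0 (S0 - i))) b.val b.isLt.le]
    rw [Finset.sum_sub_distrib, clamp_sum S0 hS0, Finset.sum_const, Finset.card_range]
    simp
  rw [hsum]
  have hb : (0 : ℝ) ≤ (b : ℕ) := Nat.cast_nonneg _
  set x := ((b : ℕ) : ℝ) with hx
  rcases le_total S0 x with h | h <;> rcases le_total (S0 + A) x with h' | h' <;>
    simp [min_def, max_def] <;> split_ifs <;> linarith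

/-- Suppose the `B` units are indexed so that the perishing times are
nondecreasing (the hindsight optimal ordering) and the sample path is offset-expiring:
`P_{<t}/B ≤ N_{<t}/N` for all `t ∈ {2,…,T}`. Then the proportional allocation `B/N` is
feasible under the hindsight optimal ordering: the process allocating total quantity
`(B/N)·N_t` in round `t` in increasing order of perishing time (i) always has enough stock,
(ii) never lets any unallocated quantity spoil, and (iii) has allocated the entire budget `B`
by the end of round `T` (no stock remains). -/
theorem stmt0 (T B : ℕ) (hT : 1 ≤ T) (hB : 1 ≤ B)
    (Tb : Fin B → ℕ) (hTb1 : ∀ b, 1 ≤ Tb b) (hsorted : Monotone Tb)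
    (N : ℕ → ℕ) (hN : ∀ t ∈ Finset.Icc 1 T, 1 ≤ N t)
    (Ntot : ℕ) (hNtot : Ntot = ∑ t ∈ Finset.Icc 1 T, N t)
    (hOE : ∀ t ∈ Finset.Icc 2 T,
      ((Finset.univ.filter (fun b : Fin B => Tb b < t)).card : ℝ) / (B : ℝ)
        ≤ ((∑ s ∈ Finset.Ico 1 t, N s : ℕ) : ℝ) / (Ntot : ℝ))
    (A : ℕ → ℝ) (hA0 : A 0 = 0)
    (hA : ∀ t ∈ Finset.Icc 1 T, A t = (B : ℝ) / (Ntot : ℝ) * (N t : ℝ)) :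
    (∀ t ∈ Finset.Icc 1 T,
        A t ≤ ∑ b, stockState (fun b : Fin B => (b : ℕ)) Tb A t b) ∧
    (∀ t ∈ Finset.Icc 1 T,
        ∑ b ∈ Finset.univ.filter (fun b : Fin B => Tb b = t),
          allocRemain (fun b : Fin B => (b : ℕ))
            (stockState (fun b : Fin B => (b : ℕ)) Tb A t) (A t) b = 0) ∧
    (∑ b, stockState (fun b : Fin B => (b : ℕ)) Tb A (T + 1) b = 0) := by
  
  classical
  have hBposR : (0:ℝ) < B := by exact_mod_cast hB
  have hNtotpos : 0 < Ntot := by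
    rw [hNtot]
    exact Finset.sum_pos (fun t ht => hN t ht) ⟨1, Finset.mem_Icc.mpr ⟨le_rfl, hT⟩⟩
  have hNtotR : (0:ℝ) < Ntot := by exact_mod_cast hNtotpos
  set S : ℕ → ℝ := fun t => ∑ s ∈ Finset.Icc 1 t, A s with hSdef
  have hAnn : ∀ s ∈ Finset.Icc 1 T, 0 ≤ A s := by
    intro s hs
    rw [hA s hs]
    positivity
  have hS0 : S 0 = 0 := by simp [hSdef]
  have hSsucc : ∀ t, S (t+1) = S t + A (t+1) := by
    intro t
    exact Finset.sum_Icc_succ_top (by omega) _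
  have hSform : ∀ t, t ≤ T → S t = (B:ℝ)/(Ntot:ℝ) * ((∑ s ∈ Finset.Icc 1 t, N s : ℕ) : ℝ) := by
    intro t ht
    rw [hSdef]
    push_cast
    rw [Finset.mul_sum]
    refine Finset.sum_congr rfl (fun s hs => ?_)
    have hs' := Finset.mem_Icc.mp hs
    exact hA s (Finset.mem_Icc.mpr ⟨hs'.1, le_trans hs'.2 ht⟩)
  have hST : S T = B := by
    rw [hSform T le_rfl, ← hNtot]
    field_simp
  have hSnn : ∀ t, t ≤ T → 0 ≤ S t := by
    intro t ht
    refine Finset.sum_nonneg (fun s hs => ?_)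
    have hs' := Finset.mem_Icc.mp hs
    exact hAnn s (Finset.mem_Icc.mpr ⟨hs'.1, le_trans hs'.2 ht⟩)
  have hSmono : ∀ s t, s ≤ t → t ≤ T → S s ≤ S t := by
    intro s t hst htT
    refine Finset.sum_le_sum_of_subset_of_nonneg (Finset.Icc_subset_Icc_right hst) ?_
    intro i hi _
    have hi' := Finset.mem_Icc.mp hi
    exact hAnn i (Finset.mem_Icc.mpr ⟨hi'.1, le_trans hi'.2 htT⟩)
  have hSleB : ∀ t, t ≤ T → S t ≤ B := by
    intro t ht
    rw [← hST]
    exact hSmono t T ht le_rfl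
  have hspoil : ∀ t, ∀ b : Fin B, Tb b = t → t ≤ T → ((b:ℕ):ℝ) + 1 ≤ S t := by
    intro t b hbt htT
    have ht1 : 1 ≤ t := hbt ▸ hTb1 b
    have hcard : (b:ℕ) + 1 ≤ (Finset.univ.filter (fun b' : Fin B => Tb b' < t + 1)).card := by
      have hsub : Finset.Iic b ⊆ Finset.univ.filter (fun b' : Fin B => Tb b' < t + 1) := by
        intro b' hb'
        simp only [Finset.mem_filter, Finset.mem_univ, true_and]
        have := hsorted (Finset.mem_Iic.mp hb')
        omega
      calc (b:ℕ) + 1 = (Finset.Iic b).card := (Fin.card_Iic b).symm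
        _ ≤ _ := Finset.card_le_card hsub
    rcases eq_or_lt_of_le htT with rfl | hlt
    · rw [hST]
      have hb := b.isLt
      have : ((b:ℕ):ℝ) + 1 ≤ (B:ℝ) := by exact_mod_cast hb
      exact this
    · have h2 : t + 1 ∈ Finset.Icc 2 T := Finset.mem_Icc.mpr ⟨by omega, by omega⟩
      have hoe := hOE (t+1) h2
      rw [Finset.Ico_add_one_right_eq_Icc] at hoe
      have hP : ((Finset.univ.filter (fun b' : Fin B => Tb b' < t + 1)).card : ℝ) ≤ S t := by
        rw [hSform t htT]
        rw [div_le_div_iff₀ hBposR hNtotR] at hoe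
        rw [div_mul_eq_mul_div, le_div_iff₀ hNtotR]
        nlinarith
      calc ((b:ℕ):ℝ) + 1 ≤ ((Finset.univ.filter (fun b' : Fin B => Tb b' < t + 1)).card : ℝ) := by
            exact_mod_cast hcard
        _ ≤ S t := hP
  have key : ∀ t, t ≤ T → ∀ b : Fin B,
      stockState (fun b : Fin B => (b : ℕ)) Tb A (t+1) b
        = 1 - min 1 (max 0 (S t - ((b:ℕ):ℝ))) := by
    intro t
    induction t with
    | zero =>
      intro _ b
      have h0 : stockState (fun b : Fin B => (b : ℕ)) Tb A 0
          = fun b' : Fin B => 1 - min 1 (max 0 ((0:ℝ) - ((b':ℕ):ℝ))) := by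
        funext b'
        have : max 0 ((0:ℝ) - ((b':ℕ):ℝ)) = 0 := by
          rw [max_eq_left]
          have : (0:ℝ) ≤ ((b':ℕ):ℝ) := Nat.cast_nonneg _
          linarith
        simp [stockState, this]
      have hTb0 : ¬ (Tb b = 0) := by have := hTb1 b; omega
      show (if Tb b = 0 then 0
        else allocRemain (fun b : Fin B => (b : ℕ))
          (stockState (fun b : Fin B => (b : ℕ)) Tb A 0) (A 0) b) = _
      rw [if_neg hTb0, h0, hA0, alloc_step 0 0 le_rfl le_rfl b, hS0]
      norm_num
    | succ t ih =>
      intro ht b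
      have htT : t ≤ T := by omega
      have hstock : stockState (fun b : Fin B => (b : ℕ)) Tb A (t+1)
          = fun b' : Fin B => 1 - min 1 (max 0 (S t - ((b':ℕ):ℝ))) := funext (ih htT)
      have halloc : allocRemain (fun b : Fin B => (b : ℕ))
          (stockState (fun b : Fin B => (b : ℕ)) Tb A (t+1)) (A (t+1)) b
          = 1 - min 1 (max 0 (S (t+1) - ((b:ℕ):ℝ))) := by
        rw [hstock, alloc_step (S t) (A (t+1)) (hSnn t htT)
          (hAnn (t+1) (Finset.mem_Icc.mpr ⟨by omega, ht⟩)) b, ← hSsucc]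
      show (if Tb b = t + 1 then 0
        else allocRemain (fun b : Fin B => (b : ℕ))
          (stockState (fun b : Fin B => (b : ℕ)) Tb A (t+1)) (A (t+1)) b) = _
      split_ifs with h
      · have hsp := hspoil (t+1) b h ht
        have h1 : (1:ℝ) ≤ S (t+1) - ((b:ℕ):ℝ) := by linarith
        rw [min_eq_left (h1.trans (le_max_right 0 _))]
        norm_num
      · exact halloc
  refine ⟨?_, ?_, ?_⟩
  · intro t ht
    obtain ⟨ht1, htT⟩ := Finset.mem_Icc.mp ht
    obtain ⟨u, rfl⟩ : ∃ u, t = u + 1 := ⟨t - 1, by omega⟩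
    have huT : u ≤ T := by omega
    have hsum : ∑ b, stockState (fun b : Fin B => (b : ℕ)) Tb A (u+1) b
        = (B:ℝ) - min (S u) (B:ℝ) := by
      rw [Finset.sum_congr rfl (fun b _ => key u huT b), Finset.sum_sub_distrib,
        Fin.sum_univ_eq_sum_range (fun i => min 1 (max 0 (S u - (i:ℝ)))),
        clamp_sum (S u) (hSnn u huT) B]
      simp
    rw [hsum, min_eq_left (hSleB u huT)]
    have h1 : S (u+1) ≤ B := hSleB (u+1) htT
    have h2 := hSsucc u
    linarith
  · intro t ht
    obtain ⟨ht1, htT⟩ := Finset.mem_Icc.mp ht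
    obtain ⟨u, rfl⟩ : ∃ u, t = u + 1 := ⟨t - 1, by omega⟩
    have huT : u ≤ T := by omega
    refine Finset.sum_eq_zero (fun b hb => ?_)
    have hbt : Tb b = u + 1 := (Finset.mem_filter.mp hb).2
    have hstock : stockState (fun b : Fin B => (b : ℕ)) Tb A (u+1)
        = fun b' : Fin B => 1 - min 1 (max 0 (S u - ((b':ℕ):ℝ))) := funext (key u huT)
    rw [hstock, alloc_step (S u) (A (u+1)) (hSnn u huT)
      (hAnn (u+1) (Finset.mem_Icc.mpr ⟨by omega, htT⟩)) b, ← hSsucc]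
    have hsp := hspoil (u+1) b hbt htT
    have h1 : (1:ℝ) ≤ S (u+1) - ((b:ℕ):ℝ) := by linarith
    rw [min_eq_left (h1.trans (le_max_right 0 _))]
    norm_num
  · refine Finset.sum_eq_zero (fun b _ => ?_)
    rw [key T le_rfl b, hST]
    have hb := b.isLt
    have h1 : (1:ℝ) ≤ (B:ℝ) - ((b:ℕ):ℝ) := by
      have : ((b:ℕ):ℝ) + 1 ≤ (B:ℝ) := by exact_mod_cast hb
      linarith
    rw [min_eq_left (h1.trans (le_max_right 0 _))]
    norm_num
end

section
/- In the instance with B = T units, one arrival per round (N_t = 1 for all t ∈ {1,...,T}), perishing times T_b = b for b ∈ {1,...,T}, and allocation order σ(b) = T+1−b (so unit T is allocated first, unit 1 last): for any allocation sequence (X_t)_{t=1}^T with X_t ≥ 0 and X_t not exceeding the available stock in round t, if the remaining stock at the start of round T is positive (some unit is still available in period T), then Σ_{t=1}^T X_t ≤ 1. -/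
open Finset

lemma stockState_succ {ι : Type*} [Fintype ι] (rank : ι → ℕ) (Tb : ι → ℕ)
    (A : ℕ → ℝ) (t : ℕ) (b : ι) :
    stockState rank Tb A (t + 1) b =
      if Tb b = t then 0 else allocRemain rank (stockState rank Tb A t) (A t) b := rfl

lemma allocRemain_of_zero {ι : Type*} [Fintype ι] (rank : ι → ℕ) (q : ι → ℝ) (A : ℝ)
    (b : ι) (hq : q b = 0) : allocRemain rank q A b = 0 := by
  unfold allocRemain
  rw [hq, min_eq_left (le_max_left _ _), sub_zero]

lemma stockState_zero_persist {ι : Type*} [Fintype ι] (rank : ι → ℕ) (Tb : ι → ℕ)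
    (A : ℕ → ℝ) (t : ℕ) (b : ι) (h : stockState rank Tb A t b = 0) :
    stockState rank Tb A (t + 1) b = 0 := by
  rw [stockState_succ]
  split
  · rfl
  · exact allocRemain_of_zero _ _ _ _ h

lemma stockState_zero_of_le {ι : Type*} [Fintype ι] (rank : ι → ℕ) (Tb : ι → ℕ)
    (A : ℕ → ℝ) (b : ι) (t : ℕ) (h : Tb b + 1 ≤ t) :
    stockState rank Tb A t b = 0 := by
  induction t with
  | zero => omega
  | succ t ih =>
    rcases Nat.lt_or_ge (Tb b + 1) (t + 1) with h' | h'
    · exact stockState_zero_persist _ _ _ _ _ (ih (by omega))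
    · have : Tb b = t := by omega
      rw [stockState_succ, if_pos this]

lemma key_max_min (a x : ℝ) (hx : 0 ≤ x) :
    max a 0 - min (max a 0) (max 0 x) = max (a - x) 0 := by
  rw [max_eq_right hx]
  rcases le_total (max a 0) x with h | h
  · rw [min_eq_left h, sub_self, eq_comm, max_eq_right]
    have := le_max_left a 0
    linarith
  · rw [min_eq_right h]
    rcases le_total a 0 with h1 | h1
    · have hmx : max a 0 = 0 := max_eq_right h1
      have hx0 : x = 0 := le_antisymm (by rwa [hmx] at h) hx
      rw [hmx, hx0, sub_zero, sub_zero, eq_comm]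
      exact max_eq_right h1
    · have hmx : max a 0 = a := max_eq_left h1
      rw [hmx] at h ⊢
      rw [eq_comm, max_eq_left (by linarith)]

/-- In the instance with `B = T` units (unit `b ∈ {1,…,T}` is represented by
`i : Fin T` with `b = i + 1`), one arrival per round, perishing times `T_b = b`, and
allocation order `σ(b) = T + 1 − b` (unit `T` first, unit `1` last): for any allocation
sequence `(X_t)_{t=1}^T` with `X t ≥ 0` and `X t` not exceeding the available stock in round
`t`, if some stock remains at the start of round `T`, then `Σ_{t=1}^T X t ≤ 1`. -/
theorem stmt2 (T : ℕ) (hT : 1 ≤ T)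
    (X : ℕ → ℝ) (hX0 : X 0 = 0) (hXnn : ∀ t ∈ Finset.Icc 1 T, 0 ≤ X t)
    (hXstock : ∀ t ∈ Finset.Icc 1 T,
      X t ≤ ∑ b, stockState (fun i : Fin T => T - (i : ℕ)) (fun i : Fin T => (i : ℕ) + 1) X t b)
    (hfeas : 0 < ∑ b,
      stockState (fun i : Fin T => T - (i : ℕ)) (fun i : Fin T => (i : ℕ) + 1) X T b) :
    ∑ t ∈ Finset.Icc 1 T, X t ≤ 1 := by
  set rk : Fin T → ℕ := fun i => T - (i : ℕ) with hrk
  set Tb : Fin T → ℕ := fun i => (i : ℕ) + 1 with hTb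
  set Q : ℕ → Fin T → ℝ := stockState rk Tb X with hQ
  set btop : Fin T := ⟨T - 1, by omega⟩ with hbtop
  -- the filter set for btop is empty (btop has the smallest rank)
  have hfilt : (Finset.univ.filter (fun b' : Fin T => rk b' < rk btop)) = ∅ := by
    rw [Finset.filter_eq_empty_iff]
    intro b' _
    have h1 : (b' : ℕ) < T := b'.isLt
    simp only [hrk, hbtop]
    omega
  have hXnn' : ∀ t, t < T → 0 ≤ X t := by
    intro t ht
    rcases Nat.eq_zero_or_pos t with h | h
    · rw [h, hX0]
    · exact hXnn t (Finset.mem_Icc.mpr ⟨h, by omega⟩)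
  -- closed form for the top unit
  have htop : ∀ t, t ≤ T → Q t btop = max (1 - ∑ s ∈ Finset.range t, X s) 0 := by
    intro t ht
    induction t with
    | zero => simp [hQ, stockState]
    | succ t ih =>
      have ht' : t ≤ T := by omega
      have hTbne : Tb btop ≠ t := by simp only [hTb, hbtop]; omega
      rw [show Q (t+1) btop = stockState rk Tb X (t+1) btop from rfl, stockState_succ,
        if_neg hTbne]
      unfold allocRemain
      rw [hfilt]
      simp only [Finset.sum_empty, sub_zero]
      rw [← hQ, ih ht']
      have hx : 0 ≤ X t := hXnn' t (by omega)
      rw [Finset.sum_range_succ, key_max_min _ _ hx]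
      ring_nf
  -- all other units are spoiled by round T
  have hzero : ∀ b : Fin T, b ≠ btop → Q T b = 0 := by
    intro b hb
    apply stockState_zero_of_le
    have h1 : (b : ℕ) < T := b.isLt
    have h2 : (b : ℕ) ≠ T - 1 := fun h => hb (Fin.ext (by simp [hbtop, h]))
    simp only [hTb]
    omega
  have hsumT : (∑ b, Q T b) = Q T btop :=
    Finset.sum_eq_single btop (fun b _ hb => hzero b hb) (by simp)
  set S : ℝ := ∑ s ∈ Finset.range T, X s with hS
  have hQT : Q T btop = max (1 - S) 0 := htop T le_rfl
  have hpos : 0 < max (1 - S) 0 := by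
    rw [← hQT, ← hsumT]
    exact hfeas
  have hS1 : S < 1 := by
    by_contra h
    push_neg at h
    rw [max_eq_right (by linarith)] at hpos
    exact lt_irrefl 0 hpos
  have hQT' : Q T btop = 1 - S := by
    rw [hQT, max_eq_left (by linarith)]
  have hXT : X T ≤ 1 - S := by
    have := hXstock T (Finset.mem_Icc.mpr ⟨hT, le_rfl⟩)
    rw [show (∑ b, stockState (fun i : Fin T => T - (i : ℕ))
      (fun i : Fin T => (i : ℕ) + 1) X T b) = ∑ b, Q T b from rfl, hsumT, hQT'] at this
    exact this
  -- rewrite the Icc sum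
  have hsum_eq : ∑ t ∈ Finset.Icc 1 T, X t = S + X T := by
    have h1 : Finset.Icc 1 T = Finset.Ico 1 (T + 1) := by
      rw [Finset.Ico_add_one_right_eq_Icc]
    have h2 : ∑ t ∈ Finset.Ico 0 1, X t + ∑ t ∈ Finset.Ico 1 (T + 1), X t
        = ∑ t ∈ Finset.Ico 0 (T + 1), X t :=
      Finset.sum_Ico_consecutive X (by norm_num) (by omega)
    have h3 : ∑ t ∈ Finset.Ico 0 1, X t = 0 := by simp [hX0]
    have h4 : ∑ t ∈ Finset.Ico 0 (T + 1), X t = S + X T := by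
      rw [← Finset.range_eq_Ico, Finset.sum_range_succ]
    rw [h1]
    linarith
  rw [hsum_eq]
  linarith
end

section
/- Let T ≥ 1 and let X satisfy 0 < X ≤ 1/T. With the allocation schedule σ(b) = T+1−b and the latest possible allocation time τ_b(1 | X, σ) = ⌈σ(b)/X⌉ = ⌈(T+1−b)/X⌉ for b ∈ {1,...,T}, and with perishing times T_b = b, the quantity Δ̄(X) := Σ_{b=1}^T 1{T_b < min{T, τ_b(1 | X, σ)}} satisfies Δ̄(X) ≥ T − 1. (In the proof one shows ⌈(T+1−b)/X⌉ ≥ T(T+1−b) for every b, whence the indicator equals 1 for every b < T.) -/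
/-- Let `T ≥ 1` and `0 < X ≤ 1/T`. With the allocation schedule
`σ(b) = T + 1 - b`, latest possible allocation times `τ_b(1 ∣ X, σ) = ⌈(T + 1 - b)/X⌉`
(for one arrival per round), and perishing times `T_b = b`, the worst-case perishing count
`Δ̄(X) = Σ_{b=1}^T 1{T_b < min{T, τ_b(1 ∣ X, σ)}}` is at least `T - 1`. -/
theorem stmt3 (T : ℕ) (hT : 1 ≤ T) (X : ℝ) (hX0 : 0 < X) (hX : X ≤ 1 / (T : ℝ)) :
    (T : ℝ) - 1 ≤
      ∑ b ∈ Finset.Icc 1 T,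
        (if (b : ℝ) < min (T : ℝ) ((⌈((T + 1 - b : ℕ) : ℝ) / X⌉ : ℤ) : ℝ) then (1 : ℝ) else 0) := by
  have hT0 : (0 : ℝ) < (T : ℝ) := by exact_mod_cast hT
  have hinv : (T : ℝ) ≤ 1 / X := by
    rw [le_div_iff₀ hX0]
    calc (T : ℝ) * X ≤ (T : ℝ) * (1 / (T : ℝ)) := by
          exact mul_le_mul_of_nonneg_left hX (le_of_lt hT0)
      _ = 1 := by field_simp
  set f : ℕ → ℝ := fun b =>
    (if (b : ℝ) < min (T : ℝ) ((⌈((T + 1 - b : ℕ) : ℝ) / X⌉ : ℤ) : ℝ) then (1 : ℝ) else 0)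
    with hf
  have hone : ∀ b ∈ Finset.Icc 1 (T - 1), (1 : ℝ) ≤ f b := by
    intro b hb
    simp only [Finset.mem_Icc] at hb
    have hbT : b < T := by omega
    have hb2 : (2 : ℝ) ≤ ((T + 1 - b : ℕ) : ℝ) := by
      have : 2 ≤ T + 1 - b := by omega
      exact_mod_cast this
    have hdiv : ((T + 1 - b : ℕ) : ℝ) * (T : ℝ) ≤ ((T + 1 - b : ℕ) : ℝ) / X := by
      rw [div_eq_mul_one_div]
      exact mul_le_mul_of_nonneg_left hinv (by linarith)
    have hceil : ((T + 1 - b : ℕ) : ℝ) / X ≤ ((⌈((T + 1 - b : ℕ) : ℝ) / X⌉ : ℤ) : ℝ) :=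
      Int.le_ceil _
    have hbR : (b : ℝ) < (T : ℝ) := by exact_mod_cast hbT
    have h2T : (b : ℝ) < 2 * (T : ℝ) := by linarith
    have hbig : (2 : ℝ) * (T : ℝ) ≤ ((T + 1 - b : ℕ) : ℝ) * (T : ℝ) :=
      mul_le_mul_of_nonneg_right hb2 (le_of_lt hT0)
    have : (b : ℝ) < min (T : ℝ) ((⌈((T + 1 - b : ℕ) : ℝ) / X⌉ : ℤ) : ℝ) :=
      lt_min hbR (by linarith)
    simp only [hf]
    rw [if_pos this]
  have hnn : ∀ b ∈ Finset.Icc 1 T, b ∉ Finset.Icc 1 (T - 1) → 0 ≤ f b := by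
    intro b _ _
    simp only [hf]
    positivity
  have hsub : Finset.Icc 1 (T - 1) ⊆ Finset.Icc 1 T := by
    apply Finset.Icc_subset_Icc_right; omega
  calc (T : ℝ) - 1 = ((T - 1 : ℕ) : ℝ) := by
        rw [Nat.cast_sub hT]; simp
    _ = ∑ b ∈ Finset.Icc 1 (T - 1), (1 : ℝ) := by
        simp [Nat.card_Icc]
    _ ≤ ∑ b ∈ Finset.Icc 1 (T - 1), f b := Finset.sum_le_sum hone
    _ ≤ ∑ b ∈ Finset.Icc 1 T, f b :=
        Finset.sum_le_sum_of_subset_of_nonneg hsub hnn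
end

section
/- In the instance with T ≥ 1 rounds, B = T units, one arrival per round (N = T, so the proportional allocation is B/N = 1), unit utility weight w = 1, perishing times T_b = b, and allocation order σ(b) = T+1−b: every allocation sequence (X_t)_{t=1}^T with X_t ≥ 0 and X_t not exceeding available stock in round t, and with positive remaining stock at the start of round T (feasibility), satisfies counterfactual envy Δ_EF = max_{t} |X_t − 1| ≥ 1 − 1/T and inefficiency Δ_efficiency = T − Σ_{t=1}^T X_t ≥ T − 1. -/
open Finset

/-!
Unit `T` comes first in the allocation order and is the only unit that has not perished by round
`T`. Positive stock at round `T` therefore means that unit `T` alone has met every earlier demand in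
full, so its stock in round `T` is at most `1 - ∑_{t < T} X t`; as `X T` cannot exceed that stock,
the whole allocation is at most `1`. Hence some round receives at most `1 / T`.
-/

section Dynamics

variable {ι : Type*} [Fintype ι] (rank : ι → ℕ)

theorem pos_of_allocRemain_pos {q : ι → ℝ} {A : ℝ} {b : ι} (h : 0 < allocRemain rank q A b) :
    0 < q b := by
  by_contra! hq
  have : min (q b) (max 0 (A - ∑ b' ∈ univ.filter (fun b' => rank b' < rank b), q b')) = q b :=
    min_eq_left (hq.trans (le_max_left _ _))
  simp only [allocRemain, this, sub_self, lt_irrefl] at h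

theorem allocRemain_le_sub_of_pos {q : ι → ℝ} {A : ℝ} {b : ι} (hb : ∀ b', rank b ≤ rank b')
    (h : 0 < allocRemain rank q A b) : allocRemain rank q A b ≤ q b - A := by
  have hlower : univ.filter (fun b' => rank b' < rank b) = ∅ :=
    filter_false_of_mem fun b' _ => not_lt.2 (hb b')
  simp only [allocRemain, hlower, sum_empty, sub_zero] at h ⊢
  rcases min_choice (q b) (max 0 A) with hmin | hmin
  · simp only [hmin, sub_self, lt_irrefl] at h
  · rw [hmin]
    linarith [le_max_right 0 A]

variable {rank} {Tb : ι → ℕ} {A : ℕ → ℝ}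

theorem stockState_eq_zero_of_lt {b : ι} {t : ℕ} (ht : Tb b < t) :
    stockState rank Tb A t b = 0 := by
  induction t with
  | zero => omega
  | succ t ih =>
    by_cases hspoil : Tb b = t
    · simp [stockState, hspoil]
    · simp [stockState, hspoil, allocRemain, ih (by omega)]

theorem stockState_le_one_sub_sum {b : ι} (hb : ∀ b', rank b ≤ rank b') {n : ℕ}
    (hpos : 0 < stockState rank Tb A n b) :
    stockState rank Tb A n b ≤ 1 - ∑ t ∈ range n, A t := by
  induction n with
  | zero => simp [stockState]
  | succ n ih =>
    have hspoil : Tb b ≠ n := fun h => by simp [stockState, h] at hpos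
    have hstep : stockState rank Tb A (n + 1) b =
        allocRemain rank (stockState rank Tb A n) (A n) b := by
      simp [stockState, hspoil]
    rw [hstep] at hpos ⊢
    have hserved := allocRemain_le_sub_of_pos rank hb hpos
    have hprev := ih (pos_of_allocRemain_pos rank hpos)
    rw [sum_range_succ]
    linarith

end Dynamics

theorem exists_le_div_card_of_sum_le {ι : Type*} {s : Finset ι} (hs : s.Nonempty) {f : ι → ℝ}
    {c : ℝ} (h : ∑ i ∈ s, f i ≤ c) : ∃ i ∈ s, f i ≤ c / #s := by
  refine exists_le_of_sum_le hs ?_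
  rw [sum_const, nsmul_eq_mul, mul_div_cancel₀ _ (by exact_mod_cast hs.card_pos.ne')]
  exact h

theorem stmt4_general (T : ℕ)
    (X : ℕ → ℝ) (hX0 : X 0 = 0)
    (hXstock : ∀ t ∈ Finset.Icc 1 T,
      X t ≤ ∑ b, stockState (fun i : Fin T => T - (i : ℕ)) (fun i : Fin T => (i : ℕ) + 1) X t b)
    (hfeas : 0 < ∑ b,
      stockState (fun i : Fin T => T - (i : ℕ)) (fun i : Fin T => (i : ℕ) + 1) X T b) :
    (∃ t ∈ Finset.Icc 1 T, 1 - 1 / (T : ℝ) ≤ |X t - 1|) ∧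
    (T : ℝ) - 1 ≤ (T : ℝ) - ∑ t ∈ Finset.Icc 1 T, X t := by
  obtain ⟨i, -⟩ := nonempty_of_sum_ne_zero hfeas.ne'
  obtain ⟨n, rfl⟩ := Nat.exists_eq_add_one_of_ne_zero i.pos.ne'
  set S := stockState (fun i : Fin (n + 1) => n + 1 - (i : ℕ)) (fun i => (i : ℕ) + 1) X
  have hlast : ∑ b, S (n + 1) b = S (n + 1) (Fin.last n) := by
    rw [Fin.sum_univ_castSucc, sum_eq_zero fun b _ => stockState_eq_zero_of_lt (by simp), zero_add]
  have hbound := stockState_le_one_sub_sum (b := Fin.last n)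
    (fun b => by simp only [Fin.val_last]; omega) (hlast ▸ hfeas)
  have hXlast := hlast ▸ hXstock (n + 1) (right_mem_Icc.2 (by omega))
  have hsum : ∑ t ∈ Icc 1 (n + 1), X t ≤ 1 := by
    have hsplit : ∑ t ∈ range (n + 2), X t = X 0 + ∑ t ∈ Icc 1 (n + 1), X t := by
      rw [range_eq_Ico, sum_eq_sum_Ico_succ_bot (Nat.succ_pos _)]; rfl
    rw [sum_range_succ, hX0] at hsplit
    linarith
  refine ⟨?_, by linarith⟩
  obtain ⟨t, ht, hXt⟩ := exists_le_div_card_of_sum_le ⟨1, by simp⟩ hsum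
  rw [Nat.card_Icc, Nat.add_sub_cancel] at hXt
  exact ⟨t, ht, by linarith [neg_abs_le (X t - 1)]⟩

/-- In the instance with `T` rounds, `B = T` units (unit `b ∈ {1,…,T}` is
`i : Fin T` with `b = i + 1`), one arrival per round (so `B/N = 1`), unit weight `1`,
perishing times `T_b = b` and allocation order `σ(b) = T + 1 − b`: every feasible allocation
sequence — `X t ≥ 0`, `X t` not exceeding available stock, and positive remaining stock at the
start of round `T` — has counterfactual envy `max_t |X t − 1| ≥ 1 − 1/T` and inefficiency
`T − Σ_t X t ≥ T − 1`. -/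
theorem stmt4 (T : ℕ) (hT : 1 ≤ T)
    (X : ℕ → ℝ) (hX0 : X 0 = 0) (hXnn : ∀ t ∈ Finset.Icc 1 T, 0 ≤ X t)
    (hXstock : ∀ t ∈ Finset.Icc 1 T,
      X t ≤ ∑ b, stockState (fun i : Fin T => T - (i : ℕ)) (fun i : Fin T => (i : ℕ) + 1) X t b)
    (hfeas : 0 < ∑ b,
      stockState (fun i : Fin T => T - (i : ℕ)) (fun i : Fin T => (i : ℕ) + 1) X T b) :
    (∃ t ∈ Finset.Icc 1 T, 1 - 1 / (T : ℝ) ≤ |X t - 1|) ∧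
    (T : ℝ) - 1 ≤ (T : ℝ) - ∑ t ∈ Finset.Icc 1 T, X t :=
  stmt4_general T X hX0 hXstock hfeas
end

section
/- Suppose the perishing times T_1,...,T_T are independent and ν_t := E[P_{<t}] ≤ t − 1 for every t ∈ {2,...,T}. Then P(P_{<t} ≤ t − 1 for all t ∈ {2,...,T}) ≥ 1 − Σ_{t=2}^T min{ Var(P_{<t})/(t − ν_t)², exp(−2(t − ν_t)²/|B^rand_{<t}|) } · 1{B^rand_{<t} ≠ ∅}. In particular the process is δ-offset-expiring for every δ at least this sum. -/
/-! For each round `t`, the event `P_{<t} ≥ t` says that the sum of the independent indicators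
`1{T_b < t}` exceeds its mean `ν_t` by `t - ν_t ≥ 1`. Chebyshev's inequality bounds its
probability by the variance term. For the exponential term, Hoeffding's lemma makes each centred
indicator sub-Gaussian with parameter `1/4`, and with parameter `0` when `P(T_b < t) ∈ {0, 1}`, so
only the random units count; if no unit is random the sum is a.s. equal to its mean and the event
is null. A union bound over `t` finishes the proof. -/

open MeasureTheory ProbabilityTheory Finset
open scoped Classical

namespace ProbabilityTheory

variable {Ω ι : Type*} [MeasurableSpace Ω] {μ : Measure Ω}

lemma iIndepFun.iIndepSet_preimage {β : Type*} [MeasurableSpace β] {f : ι → Ω → β}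
    (h : iIndepFun f μ) (hf : ∀ i, Measurable (f i)) {s : ι → Set β}
    (hs : ∀ i, MeasurableSet (s i)) : iIndepSet (fun i ↦ f i ⁻¹' s i) μ :=
  (iIndepSet_iff_meas_biInter fun i ↦ hf i (hs i)).2 fun S ↦
    (iIndepFun_iff_measure_inter_preimage_eq_mul.1 h) S fun i _ ↦ hs i

variable [IsProbabilityMeasure μ]

lemma indicator_one_ae_eq_measureReal {A : Set Ω} (hA : MeasurableSet A)
    (hdet : μ.real A ∉ Set.Ioo 0 1) :
    A.indicator (1 : Ω → ℝ) =ᵐ[μ] fun _ ↦ μ.real A := by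
  rcases (measureReal_nonneg).eq_or_lt with h0 | h0
  · rw [← h0]
    exact indicator_meas_zero ((measureReal_eq_zero_iff).1 h0.symm)
  · have h1 : μ.real A = 1 := le_antisymm measureReal_le_one (not_lt.1 fun h ↦ hdet ⟨h0, h⟩)
    have hAc : μ Aᶜ = 0 := by
      rw [prob_compl_eq_one_sub hA, (ENNReal.toReal_eq_one_iff _).1 h1, tsub_self]
    rw [h1]
    filter_upwards [indicator_ae_eq_of_ae_eq_set (f := (1 : Ω → ℝ)) (ae_eq_univ.2 hAc)] with ω hω
    simpa using hω

lemma hasSubgaussianMGF_indicator_sub_measureReal {A : Set Ω} (hA : MeasurableSet A) :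
    HasSubgaussianMGF (fun ω ↦ A.indicator 1 ω - μ.real A)
      (if μ.real A ∈ Set.Ioo 0 1 then 4⁻¹ else 0) μ := by
  split_ifs with hrand
  · have h := hasSubgaussianMGF_of_mem_Icc (X := A.indicator 1) (a := 0) (b := 1)
      ((measurable_const.indicator hA).aemeasurable (μ := μ))
      (ae_of_all _ fun ω ↦ by by_cases hω : ω ∈ A <;> simp [hω])
    rw [integral_indicator_one hA] at h
    convert h using 1
    norm_num
  · refine HasSubgaussianMGF.zero.congr ?_
    filter_upwards [indicator_one_ae_eq_measureReal hA hrand] with ω hω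
    simp [hω]

lemma measureReal_ge_integral_add_le_variance_div_sq {X : Ω → ℝ} (hX : MemLp X 2 μ) {ε : ℝ}
    (hε : 0 < ε) : μ.real {ω | μ[X] + ε ≤ X ω} ≤ variance X μ / ε ^ 2 := by
  refine (measureReal_mono fun ω (hω : μ[X] + ε ≤ X ω) ↦ ?_).trans
    (ENNReal.toReal_le_of_le_ofReal (div_nonneg (variance_nonneg _ _) (sq_nonneg _))
      (meas_ge_le_variance_div_sq hX hε))
  change ε ≤ |X ω - μ[X]|
  exact (le_sub_iff_add_le'.2 hω).trans (le_abs_self _)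

lemma one_sub_sum_measureReal_le_measureReal_forall (s : Finset ι) (P : ι → Ω → Prop) :
    1 - ∑ i ∈ s, μ.real {ω | ¬ P i ω} ≤ μ.real {ω | ∀ i ∈ s, P i ω} := by
  set G := {ω | ∀ i ∈ s, P i ω}
  have hGc : μ.real Gᶜ ≤ ∑ i ∈ s, μ.real {ω | ¬ P i ω} := by
    have : Gᶜ = ⋃ i ∈ s, {ω | ¬ P i ω} := by ext; simp [G]
    exact this ▸ measureReal_biUnion_finset_le s _
  have hcover : 1 ≤ μ.real G + μ.real Gᶜ := by
    simpa using measureReal_union_le (μ := μ) G Gᶜ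
  linarith

section Bernoulli

variable [Fintype ι] {A : ι → Set Ω}

lemma integral_sum_indicator_one (hA : ∀ i, MeasurableSet (A i)) :
    ∫ ω, ∑ i, (A i).indicator 1 ω ∂μ = ∑ i, μ.real (A i) := by
  rw [integral_finsetSum _ fun i _ ↦ (integrable_const 1).indicator (hA i)]
  exact Finset.sum_congr rfl fun i _ ↦ integral_indicator_one (hA i)

lemma measureReal_sum_indicator_ge_le_variance_div_sq (hA : ∀ i, MeasurableSet (A i)) {ε : ℝ}
    (hε : 0 < ε) :
    μ.real {ω | ∑ i, μ.real (A i) + ε ≤ ∑ i, (A i).indicator 1 ω} ≤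
      variance (fun ω ↦ ∑ i, (A i).indicator 1 ω) μ / ε ^ 2 := by
  have hL2 : MemLp (fun ω ↦ ∑ i, (A i).indicator (1 : Ω → ℝ) ω) 2 μ :=
    memLp_finsetSum _ fun i _ ↦ (memLp_const 1).indicator (hA i)
  simpa only [integral_sum_indicator_one hA] using
    measureReal_ge_integral_add_le_variance_div_sq hL2 hε

lemma measureReal_sum_indicator_ge_le_exp (hA : ∀ i, MeasurableSet (A i)) (hind : iIndepSet A μ)
    {ε : ℝ} (hε : 0 ≤ ε) :
    μ.real {ω | ∑ i, μ.real (A i) + ε ≤ ∑ i, (A i).indicator 1 ω} ≤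
      Real.exp (-2 * ε ^ 2 / (univ.filter fun i ↦ μ.real (A i) ∈ Set.Ioo 0 1).card) := by
  have hX : iIndepFun (fun i ω ↦ (A i).indicator 1 ω - μ.real (A i)) μ :=
    hind.iIndepFun_indicator.comp (fun i x ↦ x - μ.real (A i)) fun i ↦ measurable_id.sub_const _
  convert HasSubgaussianMGF.measure_sum_ge_le_of_iIndepFun hX (s := univ)
    (fun i _ ↦ hasSubgaussianMGF_indicator_sub_measureReal (hA i)) hε using 2
  · ext ω
    simp only [Set.mem_ofPred_eq, Finset.sum_sub_distrib]
    constructor <;> intro h <;> linarith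
  · -- the parameters add up to a quarter of the number of random events
    rw [Finset.sum_ite, Finset.sum_const_zero, add_zero, Finset.sum_const, nsmul_eq_mul]
    push_cast
    ring

lemma measureReal_sum_indicator_ge_eq_zero (hA : ∀ i, MeasurableSet (A i))
    (hdet : ∀ i, μ.real (A i) ∉ Set.Ioo 0 1) {ε : ℝ} (hε : 0 < ε) :
    μ.real {ω | ∑ i, μ.real (A i) + ε ≤ ∑ i, (A i).indicator 1 ω} = 0 := by
  refine (measureReal_eq_zero_iff).2 (measure_eq_zero_iff_ae_notMem.2 ?_)
  filter_upwards [ae_all_iff.2 fun i ↦ indicator_one_ae_eq_measureReal (hA i) (hdet i)] with ω hω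
  simp [hω, hε]

lemma measureReal_sum_indicator_ge_le (hA : ∀ i, MeasurableSet (A i)) (hind : iIndepSet A μ)
    {ε : ℝ} (hε : 0 < ε) :
    μ.real {ω | ∑ i, μ.real (A i) + ε ≤ ∑ i, (A i).indicator 1 ω} ≤
      if (univ.filter fun i ↦ μ.real (A i) ∈ Set.Ioo 0 1).Nonempty then
        min (variance (fun ω ↦ ∑ i, (A i).indicator 1 ω) μ / ε ^ 2)
          (Real.exp (-2 * ε ^ 2 / (univ.filter fun i ↦ μ.real (A i) ∈ Set.Ioo 0 1).card))
      else 0 := by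
  split_ifs with hrand
  · exact le_min (measureReal_sum_indicator_ge_le_variance_div_sq hA hε)
      (measureReal_sum_indicator_ge_le_exp hA hind hε.le)
  · simp only [Finset.not_nonempty_iff_eq_empty, Finset.filter_eq_empty_iff] at hrand
    exact (measureReal_sum_indicator_ge_eq_zero hA (fun i ↦ hrand (mem_univ i)) hε).le

end Bernoulli

lemma measureReal_card_filter_lt_gt_pred_le [Fintype ι] {τ : ι → Ω → ℕ}
    (hmeas : ∀ i, Measurable (τ i)) (hindep : iIndepFun τ μ) {t : ℕ}
    (hν : ∑ i, μ.real {ω | τ i ω < t} < t) :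
    μ.real {ω | ¬ (univ.filter fun i ↦ τ i ω < t).card ≤ t - 1} ≤
      if (univ.filter fun i ↦ μ.real {ω | τ i ω < t} ∈ Set.Ioo (0 : ℝ) 1).Nonempty then
        min (variance (fun ω ↦ ∑ i, if τ i ω < t then (1 : ℝ) else 0) μ /
            ((t : ℝ) - ∑ i, μ.real {ω | τ i ω < t}) ^ 2)
          (Real.exp (-2 * ((t : ℝ) - ∑ i, μ.real {ω | τ i ω < t}) ^ 2 /
            (univ.filter fun i ↦ μ.real {ω | τ i ω < t} ∈ Set.Ioo (0 : ℝ) 1).card))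
      else 0 := by
  set A : ι → Set Ω := fun i ↦ {ω | τ i ω < t}
  have hA : ∀ i, MeasurableSet (A i) := fun i ↦ hmeas i measurableSet_Iio
  have hind : iIndepSet A μ := hindep.iIndepSet_preimage hmeas fun _ ↦ measurableSet_Iio
  have hsum : ∀ ω, ∑ i, (if τ i ω < t then (1 : ℝ) else 0) = ∑ i, (A i).indicator 1 ω := by
    intro ω
    simp [A, Set.indicator_apply]
  have hbad : {ω | ¬ (univ.filter fun i ↦ τ i ω < t).card ≤ t - 1} =
      {ω | ∑ i, μ.real (A i) + (t - ∑ i, μ.real (A i)) ≤ ∑ i, (A i).indicator 1 ω} := by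
    have ht : 1 ≤ t := by
      have : (0 : ℝ) < t := (Finset.sum_nonneg fun i _ ↦ measureReal_nonneg).trans_lt hν
      exact_mod_cast this
    ext ω
    rw [Set.mem_ofPred_eq, Set.mem_ofPred_eq, add_sub_cancel, ← hsum, Finset.sum_boole]
    constructor <;> intro h
    · exact_mod_cast (by omega : t ≤ _)
    · have : t ≤ (univ.filter fun i ↦ τ i ω < t).card := by exact_mod_cast h
      omega
  rw [hbad, funext hsum]
  exact measureReal_sum_indicator_ge_le hA hind (sub_pos.2 hν)

end ProbabilityTheory

theorem stmt9_general {Ω : Type*} [MeasurableSpace Ω] (μ : Measure Ω) [IsProbabilityMeasure μ]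
    (T : ℕ)
    (Tb : Fin T → Ω → ℕ) (hmeas : ∀ b, Measurable (Tb b))
    (hindep : iIndepFun Tb μ)
    (hmean : ∀ t ∈ Finset.Icc 2 T,
      (∑ b : Fin T, (μ {ω | Tb b ω < t}).toReal) ≤ (t : ℝ) - 1) :
    1 - ∑ t ∈ Finset.Icc 2 T,
        (if (Finset.univ.filter
              (fun b : Fin T => (μ {ω | Tb b ω < t}).toReal ∈ Set.Ioo (0 : ℝ) 1)).Nonempty
          then
            min
              (variance (fun ω => ∑ b : Fin T, if Tb b ω < t then (1 : ℝ) else 0) μ /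
                ((t : ℝ) - ∑ b : Fin T, (μ {ω | Tb b ω < t}).toReal) ^ 2)
              (Real.exp (-2 * ((t : ℝ) - ∑ b : Fin T, (μ {ω | Tb b ω < t}).toReal) ^ 2 /
                ((Finset.univ.filter
                  (fun b : Fin T =>
                    (μ {ω | Tb b ω < t}).toReal ∈ Set.Ioo (0 : ℝ) 1)).card : ℝ)))
          else 0)
      ≤ (μ {ω | ∀ s ∈ Finset.Icc 2 T,
          (Finset.univ.filter (fun b : Fin T => Tb b ω < s)).card ≤ s - 1}).toReal := by
  refine le_trans ?_ (one_sub_sum_measureReal_le_measureReal_forall (Finset.Icc 2 T)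
    fun s ω ↦ (Finset.univ.filter fun b : Fin T ↦ Tb b ω < s).card ≤ s - 1)
  gcongr with t ht
  exact measureReal_card_filter_lt_gt_pred_le hmeas hindep
    ((hmean t ht).trans_lt (sub_lt_self _ one_pos))

/-- With `T ≥ 2` rounds, `B = T` units, independent random perishing times
`Tb b`, `P_{<t} = Σ_b 1{Tb b < t}`, `ν_t = E[P_{<t}] = Σ_b P(Tb b < t)` and
`B^rand_{<t} = {b : P(Tb b < t) ∈ (0,1)}`: if `ν_t ≤ t − 1` for every `t ∈ {2,…,T}`, then
`P(P_{<t} ≤ t − 1 ∀ t ∈ {2,…,T}) ≥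
  1 − Σ_{t=2}^T min{Var(P_{<t})/(t − ν_t)², exp(−2(t − ν_t)²/|B^rand_{<t}|)}·1{B^rand_{<t} ≠ ∅}`;
in particular the process is `δ`-offset-expiring for every `δ` at least this sum. -/
theorem stmt9 {Ω : Type*} [MeasurableSpace Ω] (μ : Measure Ω) [IsProbabilityMeasure μ]
    (T : ℕ) (hT : 2 ≤ T)
    (Tb : Fin T → Ω → ℕ) (hmeas : ∀ b, Measurable (Tb b)) (hTb1 : ∀ b, ∀ᵐ ω ∂μ, 1 ≤ Tb b ω)
    (hindep : iIndepFun Tb μ)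
    (hmean : ∀ t ∈ Finset.Icc 2 T,
      (∑ b : Fin T, (μ {ω | Tb b ω < t}).toReal) ≤ (t : ℝ) - 1) :
    1 - ∑ t ∈ Finset.Icc 2 T,
        (if (Finset.univ.filter
              (fun b : Fin T => (μ {ω | Tb b ω < t}).toReal ∈ Set.Ioo (0 : ℝ) 1)).Nonempty
          then
            min
              (variance (fun ω => ∑ b : Fin T, if Tb b ω < t then (1 : ℝ) else 0) μ /
                ((t : ℝ) - ∑ b : Fin T, (μ {ω | Tb b ω < t}).toReal) ^ 2)
              (Real.exp (-2 * ((t : ℝ) - ∑ b : Fin T, (μ {ω | Tb b ω < t}).toReal) ^ 2 /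
                ((Finset.univ.filter
                  (fun b : Fin T =>
                    (μ {ω | Tb b ω < t}).toReal ∈ Set.Ioo (0 : ℝ) 1)).card : ℝ)))
          else 0)
      ≤ (μ {ω | ∀ s ∈ Finset.Icc 2 T,
          (Finset.univ.filter (fun b : Fin T => Tb b ω < s)).card ≤ s - 1}).toReal :=
  stmt9_general μ T Tb hmeas hindep hmean
end

section
/- Suppose T_1,...,T_T are i.i.d. Geometric(p) random variables (P(T_b = k) = p(1−p)^{k−1} for k = 1,2,...) with 0 < p and T·p < 1, and T ≥ 2. Then P(P_{<t} ≤ t − 1 for all t ∈ {2,...,T}) ≥ 1 − 2 log(T) · T p / (1 − T p)²; that is, the perishing process is δ-offset-expiring for every δ ≥ 2 log(T) · T p / (1 − T p)². -/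
/-!
Let `N_t` be the number of units perished before round `t`. It is a sum of `T` independent
indicators, each of mean at most `(t - 1) p`, so its mean and variance are at most `T p t`.
Chebyshev's inequality then gives `P(N_t ≥ t) ≤ T p t / (t (1 - T p))² = T p / ((1 - T p)² t)`,
and a union bound over `t ∈ [2, T]` with `∑_{t=2}^T 1/t ≤ log T` bounds the failure probability
by `log T · T p / (1 - T p)²`.
-/

open MeasureTheory ProbabilityTheory Finset

theorem sum_Icc_two_inv_le_log (n : ℕ) : ∑ t ∈ Icc 2 n, (t : ℝ)⁻¹ ≤ Real.log n := by
  rcases Nat.eq_zero_or_pos n with rfl | hn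
  · simp
  have h := harmonic_le_one_add_log n
  rw [harmonic_eq_sum_Icc, ← insert_Icc_add_one_left_eq_Icc hn, sum_insert (by simp)] at h
  push_cast at h
  linarith

section
variable {Ω : Type*} [MeasurableSpace Ω] {μ : Measure Ω}

theorem one_sub_measureReal_le_of_compl_subset [IsProbabilityMeasure μ] {s t : Set Ω}
    (h : tᶜ ⊆ s) : 1 - μ.real s ≤ μ.real t := by
  have : μ.real Set.univ ≤ μ.real (t ∪ s) :=
    measureReal_mono fun ω _ => (em (ω ∈ t)).imp id fun h' => h h'
  linarith [measureReal_union_le (μ := μ) t s, probReal_univ (μ := μ)]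

theorem variance_le_integral_of_mem_Icc [IsProbabilityMeasure μ] {X : Ω → ℝ}
    (hX : AEStronglyMeasurable X μ) (h01 : ∀ ω, X ω ∈ Set.Icc 0 1) : variance X μ ≤ μ[X] := by
  refine (variance_le_expectation_sq hX).trans <|
    integral_mono_of_nonneg (ae_of_all _ fun ω => sq_nonneg _) ?_ (ae_of_all _ fun ω => ?_)
  · exact Integrable.of_bound hX 1
      (ae_of_all _ fun ω => abs_le.2 ⟨by linarith [(h01 ω).1], (h01 ω).2⟩)
  · simpa [sq] using mul_le_of_le_one_left (h01 ω).1 (h01 ω).2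

theorem measureReal_le_sum_le [IsProbabilityMeasure μ] {ι : Type*} [Fintype ι]
    {X : ι → Ω → ℝ} (hX : ∀ i, AEStronglyMeasurable (X i) μ)
    (hindep : Pairwise fun i j => IndepFun (X i) (X j) μ) (h01 : ∀ i ω, X i ω ∈ Set.Icc 0 1)
    {q s : ℝ} (hq : ∀ i, μ[X i] ≤ q) (hs : Fintype.card ι * q < s) :
    μ.real {ω | s ≤ ∑ i, X i ω} ≤ Fintype.card ι * q / (s - Fintype.card ι * q) ^ 2 := by
  have hL2 : ∀ i, MemLp (X i) 2 μ := fun i =>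
    MemLp.of_bound (hX i) 1 (ae_of_all _ fun ω => abs_le.2 ⟨by linarith [(h01 i ω).1], (h01 i ω).2⟩)
  set S := ∑ i, X i with hS
  have hmean : μ[S] ≤ Fintype.card ι * q := by
    simp only [hS, Finset.sum_apply]
    rw [integral_finsetSum _ fun i _ => (hL2 i).integrable one_le_two]
    simpa using sum_le_sum fun i (_ : i ∈ univ) => hq i
  have hvar : variance S μ ≤ Fintype.card ι * q := by
    rw [hS, IndepFun.variance_sum (fun i _ => hL2 i) fun i _ j _ hij => hindep hij]
    simpa using sum_le_sum fun i (_ : i ∈ univ) =>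
      (variance_le_integral_of_mem_Icc (hX i) (h01 i)).trans (hq i)
  have hdev : {ω | s ≤ ∑ i, X i ω} ⊆ {ω | s - Fintype.card ι * q ≤ |S ω - μ[S]|} :=
    fun ω (hω : s ≤ ∑ i, X i ω) => by
      rw [← Finset.sum_apply, ← hS] at hω
      exact (by linarith : s - Fintype.card ι * q ≤ S ω - μ[S]).trans (le_abs_self _)
  calc μ.real {ω | s ≤ ∑ i, X i ω}
      ≤ μ.real {ω | s - Fintype.card ι * q ≤ |S ω - μ[S]|} := measureReal_mono hdev
    _ ≤ variance S μ / (s - Fintype.card ι * q) ^ 2 :=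
        ENNReal.toReal_le_of_le_ofReal (div_nonneg (variance_nonneg _ _) (sq_nonneg _))
          (meas_ge_le_variance_div_sq (memLp_finsetSum' _ fun i _ => hL2 i) (by linarith))
    _ ≤ Fintype.card ι * q / (s - Fintype.card ι * q) ^ 2 := by gcongr

theorem measureReal_lt_le_of_one_le {X : Ω → ℕ} (hX : ∀ᵐ ω ∂μ, 1 ≤ X ω) {p : ℝ}
    (hp : ∀ k, 1 ≤ k → μ.real {ω | X ω = k} ≤ p) (t : ℕ) :
    μ.real {ω | X ω < t} ≤ (t - 1 : ℕ) * p :=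
  calc μ.real {ω | X ω < t} = μ.real (⋃ k ∈ Ico 1 t, {ω | X ω = k}) :=
        measureReal_congr <| Filter.eventuallyEq_set.2 <| hX.mono fun ω hω => by simp; omega
    _ ≤ ∑ k ∈ Ico 1 t, μ.real {ω | X ω = k} := measureReal_biUnion_finset_le _ _
    _ ≤ ∑ k ∈ Ico 1 t, p := sum_le_sum fun k hk => hp k (mem_Ico.1 hk).1
    _ = (t - 1 : ℕ) * p := by simp

theorem measureReal_le_card_filter_lt_le [IsProbabilityMeasure μ] {ι : Type*} [Fintype ι]
    {Y : ι → Ω → ℕ} (hY : ∀ i, Measurable (Y i)) (hindep : iIndepFun Y μ) {t : ℕ} {q : ℝ}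
    (hq : ∀ i, μ.real {ω | Y i ω < t} ≤ q) (hlt : Fintype.card ι * q < t) :
    μ.real {ω | t ≤ #{i | Y i ω < t}} ≤ Fintype.card ι * q / (t - Fintype.card ι * q) ^ 2 := by
  have hcount : {ω | t ≤ #{i | Y i ω < t}} =
      {ω | (t : ℝ) ≤ ∑ i, {ω | Y i ω < t}.indicator 1 ω} := by
    ext ω
    simp [Set.indicator_apply, Finset.sum_boole]
  rw [hcount]
  refine measureReal_le_sum_le (fun i => ?_) (fun i j hij => ?_) (fun i ω => ?_) (fun i => ?_) hlt
  · exact (measurable_one.indicator (measurableSet_lt (hY i) measurable_const)).aestronglyMeasurable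
  · change IndepFun ((Set.Iio t).indicator 1 ∘ Y i) ((Set.Iio t).indicator 1 ∘ Y j) μ
    exact (hindep.indepFun hij).comp measurable_from_nat measurable_from_nat
  · by_cases h : Y i ω < t <;> simp [h]
  · rw [integral_indicator_one (measurableSet_lt (hY i) measurable_const)]
    exact hq i

theorem measureReal_le_card_filter_lt_le_of_geometric [IsProbabilityMeasure μ] {ι : Type*}
    [Fintype ι] {p : ℝ} (hp : 0 < p) (hιp : Fintype.card ι * p < 1) {Y : ι → Ω → ℕ}
    (hY : ∀ i, Measurable (Y i)) (hindep : iIndepFun Y μ)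
    (hgeom : ∀ i k, 1 ≤ k → μ {ω | Y i ω = k} = ENNReal.ofReal (p * (1 - p) ^ (k - 1)))
    (hY1 : ∀ i, ∀ᵐ ω ∂μ, 1 ≤ Y i ω) {t : ℕ} (ht : 0 < t) :
    μ.real {ω | t ≤ #{i | Y i ω < t}} ≤
      Fintype.card ι * p / (1 - Fintype.card ι * p) ^ 2 * (t : ℝ)⁻¹ := by
  set n : ℝ := (Fintype.card ι : ℝ)
  have hpoint : ∀ i k, 1 ≤ k → μ.real {ω | Y i ω = k} ≤ p := fun i k hk => by
    have : (1 : ℝ) ≤ n := Nat.one_le_cast.2 (Fintype.card_pos_iff.2 ⟨i⟩)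
    have hp1 : 0 ≤ 1 - p := by nlinarith
    rw [measureReal_def, hgeom i k hk, ENNReal.toReal_ofReal (by positivity)]
    exact mul_le_of_le_one_right hp.le (pow_le_one₀ hp1 (by linarith))
  have htR : (0 : ℝ) < t := by exact_mod_cast ht
  have hnq : n * ((t - 1 : ℕ) * p) ≤ n * p * t := by
    have : ((t - 1 : ℕ) : ℝ) ≤ t := by exact_mod_cast Nat.sub_le t 1
    nlinarith [mul_le_mul_of_nonneg_left this (by positivity : (0 : ℝ) ≤ n * p)]
  have hden : 0 < (t : ℝ) - n * p * t := by nlinarith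
  calc μ.real {ω | t ≤ #{i | Y i ω < t}}
      ≤ n * ((t - 1 : ℕ) * p) / (t - n * ((t - 1 : ℕ) * p)) ^ 2 :=
        measureReal_le_card_filter_lt_le hY hindep
          (fun i => measureReal_lt_le_of_one_le (hY1 i) (hpoint i) t) (by linarith)
    _ ≤ n * p * t / (t - n * p * t) ^ 2 :=
        div_le_div₀ (by positivity) hnq (by positivity) (pow_le_pow_left₀ hden.le (by linarith) 2)
    _ = n * p / (1 - n * p) ^ 2 * (t : ℝ)⁻¹ := by field_simp

end

theorem stmt10_general {Ω : Type*} [MeasurableSpace Ω] (μ : Measure Ω) [IsProbabilityMeasure μ]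
    (T : ℕ)
    (p : ℝ) (hp : 0 < p) (hTp : (T : ℝ) * p < 1)
    (Tb : Fin T → Ω → ℕ) (hmeas : ∀ b, Measurable (Tb b))
    (hindep : iIndepFun Tb μ)
    (hgeom : ∀ b : Fin T, ∀ k : ℕ, 1 ≤ k →
      μ {ω | Tb b ω = k} = ENNReal.ofReal (p * (1 - p) ^ (k - 1)))
    (hTb1 : ∀ b, ∀ᵐ ω ∂μ, 1 ≤ Tb b ω) :
    1 - 2 * Real.log T * ((T : ℝ) * p) / (1 - (T : ℝ) * p) ^ 2
      ≤ (μ {ω | ∀ t ∈ Finset.Icc 2 T,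
          (Finset.univ.filter (fun b : Fin T => Tb b ω < t)).card ≤ t - 1}).toReal := by
  set c : ℝ := T * p / (1 - T * p) ^ 2
  have hround : ∀ t ∈ Icc 2 T, μ.real {ω | t ≤ #{b | Tb b ω < t}} ≤ c * (t : ℝ)⁻¹ :=
    fun t ht => by
      simpa [c] using measureReal_le_card_filter_lt_le_of_geometric hp (by simpa using hTp)
        hmeas hindep hgeom hTb1 (by have := (mem_Icc.1 ht).1; omega)
  have hunion : μ.real (⋃ t ∈ Icc 2 T, {ω | t ≤ #{b | Tb b ω < t}}) ≤ c * Real.log T := by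
    refine (measureReal_biUnion_finset_le _ _).trans <| (sum_le_sum hround).trans ?_
    rw [← mul_sum]
    gcongr
    exact sum_Icc_two_inv_le_log T
  have hslack : c * Real.log T ≤ 2 * Real.log T * ((T : ℝ) * p) / (1 - (T : ℝ) * p) ^ 2 := by
    have : 0 ≤ c * Real.log T := mul_nonneg (by positivity) (Real.log_natCast_nonneg T)
    rw [show 2 * Real.log T * ((T : ℝ) * p) / (1 - T * p) ^ 2 = 2 * (c * Real.log T) by ring]
    linarith
  refine (sub_le_sub_left (hunion.trans hslack) 1).trans
    (one_sub_measureReal_le_of_compl_subset fun ω hω => ?_)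
  simp only [Set.mem_compl_iff, Set.mem_ofPred_eq, not_forall, Set.mem_iUnion] at hω ⊢
  obtain ⟨t, ht, hcard⟩ := hω
  exact ⟨t, ht, by have := (mem_Icc.1 ht).1; omega⟩

/-- Suppose `Tb 1, …, Tb T` are i.i.d. `Geometric(p)` perishing times
(`P(Tb b = k) = p (1−p)^{k−1}` for `k ≥ 1`) with `0 < p`, `T·p < 1` and `T ≥ 2`, and
`P_{<t} = Σ_b 1{Tb b < t}`. Then
`P(P_{<t} ≤ t − 1 for all t ∈ {2,…,T}) ≥ 1 − 2 log(T)·Tp/(1 − Tp)²`; that is, the process is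
`δ`-offset-expiring for every `δ ≥ 2 log(T)·Tp/(1 − Tp)²`. -/
theorem stmt10 {Ω : Type*} [MeasurableSpace Ω] (μ : Measure Ω) [IsProbabilityMeasure μ]
    (T : ℕ) (hT : 2 ≤ T)
    (p : ℝ) (hp : 0 < p) (hTp : (T : ℝ) * p < 1)
    (Tb : Fin T → Ω → ℕ) (hmeas : ∀ b, Measurable (Tb b))
    (hindep : iIndepFun Tb μ)
    (hgeom : ∀ b : Fin T, ∀ k : ℕ, 1 ≤ k →
      μ {ω | Tb b ω = k} = ENNReal.ofReal (p * (1 - p) ^ (k - 1)))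
    (hTb1 : ∀ b, ∀ᵐ ω ∂μ, 1 ≤ Tb b ω) :
    1 - 2 * Real.log T * ((T : ℝ) * p) / (1 - (T : ℝ) * p) ^ 2
      ≤ (μ {ω | ∀ t ∈ Finset.Icc 2 T,
          (Finset.univ.filter (fun b : Fin T => Tb b ω < t)).card ≤ t - 1}).toReal :=
  stmt10_general μ T p hp hTp Tb hmeas hindep hgeom hTb1
end

section
/- Suppose T_1,...,T_T are i.i.d. Geometric(p) random variables (P(T_b = k) = p(1−p)^{k−1} for k = 1,2,...) with 0 < p and T·p < 1. Then for every t ∈ {2,...,T}: E[P_{<t}] = T(1 − (1−p)^{t−1}), Var(P_{<t}) = T(1 − (1−p)^{t−1})(1−p)^{t−1}, the quantity t − E[P_{<t}] is strictly positive, and P(P_{<t} > t − 1) ≤ T p (1 − (t−1)p) / ((t−1)(1 − T p)²). -/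
open MeasureTheory ProbabilityTheory Finset

/-!
Each indicator `1{T_b < t}` is Bernoulli with parameter `q = 1 - (1 - p)^(t-1)`, the geometric
distribution function, so `P_{<t}` is a sum of `T` independent Bernoulli(`q`) variables, with mean
`T q` and variance `T q (1 - q)`. Bernoulli's inequality gives `q ≤ (t - 1) p`, so
`T q ≤ (t - 1) T p < t - 1`. Chebyshev's inequality bounds `P(P_{<t} ≥ t)` by
`T q (1 - q) / (t - T q)^2`, and `q ≤ (t - 1) p` turns this into the stated bound.
-/

lemma one_sub_one_sub_pow_le_mul {p : ℝ} (hp : p ≤ 2) (n : ℕ) : 1 - (1 - p) ^ n ≤ n * p := by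
  have := one_add_mul_le_pow (a := -p) (by linarith) n
  rw [← sub_eq_add_neg] at this
  linarith

lemma chebyshev_ratio_le {n T p q : ℝ} (hn : 1 ≤ n) (hnT : n + 1 ≤ T) (hp : 0 < p) (hTp : T * p < 1)
    (hq1 : q ≤ 1) (hqn : q ≤ n * p) :
    T * (q * (1 - q)) / (n + 1 - T * q) ^ 2 ≤ T * p * (1 - n * p) / (n * (1 - T * p) ^ 2) := by
  set u := 1 - T * p
  set a := 1 - n * p
  set d := n * p - q
  have hu : 0 < u := by linarith
  have hd : 0 ≤ d := by linarith
  have hua : u ≤ a := by nlinarith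
  have hnu : 0 ≤ n * u := by positivity
  have hTd : 0 ≤ T * d := mul_nonneg (by linarith) hd
  have hgap : n + 1 - T * q = 1 + n * u + T * d := by ring
  have key : n * u ^ 2 * (q * (1 - q)) ≤ p * a * (n + 1 - T * q) ^ 2 :=
    calc n * u ^ 2 * (q * (1 - q)) ≤ n * u ^ 2 * (n * p * (1 - q)) := by
          gcongr
      _ = p * ((n * u) ^ 2 * a + (n * u) * (u * n) * d) := by ring
      _ ≤ p * ((n * u) ^ 2 * a + (n * u) * (a * T) * d) := by gcongr <;> linarith
      _ ≤ p * a * (n * u + T * d) ^ 2 := by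
        nlinarith [mul_nonneg (mul_nonneg hp.le (hu.le.trans hua))
          (add_nonneg (mul_nonneg hnu hTd) (sq_nonneg (T * d)))]
      _ ≤ p * a * (n + 1 - T * q) ^ 2 := by rw [hgap]; gcongr <;> nlinarith
  have hS : 0 < n + 1 - T * q := by rw [hgap]; positivity
  rw [div_le_div_iff₀ (by positivity) (by positivity)]
  nlinarith [mul_le_mul_of_nonneg_left key (by linarith : (0 : ℝ) ≤ T)]

section
variable {Ω : Type*} [MeasurableSpace Ω] {μ : Measure Ω}

lemma measure_lt_eq_of_geometric {X : Ω → ℕ} {p : ℝ} (hX : Measurable X)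
    (hX1 : ∀ᵐ ω ∂μ, 1 ≤ X ω) (hp0 : 0 ≤ p) (hp1 : p ≤ 1)
    (hgeom : ∀ k, 1 ≤ k → μ {ω | X ω = k} = ENNReal.ofReal (p * (1 - p) ^ (k - 1))) (t : ℕ) :
    μ {ω | X ω < t} = ENNReal.ofReal (1 - (1 - p) ^ (t - 1)) := by
  induction t with
  | zero => simp
  | succ t ih =>
    have hsplit : {ω | X ω < t + 1} = {ω | X ω < t} ∪ {ω | X ω = t} := by
      ext ω; simp [le_iff_lt_or_eq]
    have hdisj : Disjoint {ω | X ω < t} {ω | X ω = t} :=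
      Set.disjoint_left.2 fun ω h1 h2 => (ne_of_lt h1) h2
    rw [hsplit, measure_union hdisj (hX (measurableSet_singleton t)), ih]
    rcases t with _ | t
    · have h0 : μ {ω | X ω = 0} = 0 :=
        measure_mono_null (fun ω (h : X ω = 0) => show ¬1 ≤ X ω by omega) (ae_iff.1 hX1)
      simp [h0]
    · rw [hgeom _ le_add_self, ← ENNReal.ofReal_add (by simp [pow_le_one₀, *])
        (mul_nonneg hp0 (pow_nonneg (by linarith) _))]
      congr 1
      simp only [Nat.add_sub_cancel, pow_succ]
      ring

lemma integral_ite_lt {Y : Ω → ℕ} (hY : Measurable Y) (t : ℕ) :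
    ∫ ω, (if Y ω < t then (1 : ℝ) else 0) ∂μ = μ.real {ω | Y ω < t} := by
  rw [← integral_indicator_one (measurableSet_lt hY measurable_const)]
  congr 1 with ω
  simp [Set.indicator_apply]

lemma memLp_ite_lt [IsFiniteMeasure μ] {Y : Ω → ℕ} (hY : Measurable Y) (t : ℕ) :
    MemLp (fun ω => if Y ω < t then (1 : ℝ) else 0) 2 μ :=
  MemLp.of_bound (Measurable.ite (measurableSet_lt hY measurable_const) measurable_const
    measurable_const).aestronglyMeasurable 1 (ae_of_all _ fun ω => by split_ifs <;> simp)

lemma integral_sum_ite_lt [IsFiniteMeasure μ] {ι : Type*} [Fintype ι] {Y : ι → Ω → ℕ} {t : ℕ}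
    {q : ℝ} (hY : ∀ i, Measurable (Y i)) (hq : ∀ i, μ.real {ω | Y i ω < t} = q) :
    ∫ ω, ∑ i, (if Y i ω < t then (1 : ℝ) else 0) ∂μ = Fintype.card ι * q := by
  rw [integral_finsetSum _ fun i _ => (memLp_ite_lt (hY i) t).integrable one_le_two]
  simp [integral_ite_lt (hY _), hq]

lemma measureReal_le_variance_div_sq [IsFiniteMeasure μ] {X : Ω → ℝ} (hX : MemLp X 2 μ)
    {s : Set Ω} {a : ℝ} (ha : μ[X] < a) (hs : ∀ ω ∈ s, a ≤ X ω) :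
    μ.real s ≤ variance X μ / (a - μ[X]) ^ 2 := by
  have hsub : s ⊆ {ω | a - μ[X] ≤ |X ω - μ[X]|} := fun ω hω =>
    (sub_le_sub_right (hs ω hω) _).trans (le_abs_self _)
  calc μ.real s ≤ μ.real {ω | a - μ[X] ≤ |X ω - μ[X]|} := measureReal_mono hsub
    _ ≤ variance X μ / (a - μ[X]) ^ 2 :=
      ENNReal.toReal_le_of_le_ofReal (div_nonneg (variance_nonneg _ _) (sq_nonneg _))
        (meas_ge_le_variance_div_sq hX (sub_pos.2 ha))

variable [IsProbabilityMeasure μ]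

lemma variance_eq_of_sq_eq_self {X : Ω → ℝ} (hX : MemLp X 2 μ) (hsq : X ^ 2 = X) :
    variance X μ = μ[X] * (1 - μ[X]) := by
  rw [variance_eq_sub hX, hsq]
  ring

lemma variance_sum_eq_card_mul {ι : Type*} [Fintype ι] {X : ι → Ω → ℝ} {q : ℝ}
    (hind : iIndepFun X μ) (hX : ∀ i, MemLp (X i) 2 μ) (hsq : ∀ i, X i ^ 2 = X i)
    (hq : ∀ i, μ[X i] = q) :
    variance (fun ω => ∑ i, X i ω) μ = Fintype.card ι * (q * (1 - q)) := by
  rw [← Finset.sum_fn, IndepFun.variance_sum (fun i _ => hX i)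
    (fun i _ j _ hij => hind.indepFun hij)]
  simp [variance_eq_of_sq_eq_self (hX _) (hsq _), hq]

lemma variance_sum_ite_lt {ι : Type*} [Fintype ι] {Y : ι → Ω → ℕ} {t : ℕ} {q : ℝ}
    (hY : ∀ i, Measurable (Y i)) (hind : iIndepFun Y μ)
    (hq : ∀ i, μ.real {ω | Y i ω < t} = q) :
    variance (fun ω => ∑ i, if Y i ω < t then (1 : ℝ) else 0) μ
      = Fintype.card ι * (q * (1 - q)) :=
  variance_sum_eq_card_mul
    (hind.comp (fun _ k => if k < t then (1 : ℝ) else 0) fun _ => measurable_from_top)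
    (fun i => memLp_ite_lt (hY i) t)
    (fun i => by ext ω; simp only [Pi.pow_apply]; split_ifs <;> simp)
    (fun i => (integral_ite_lt (hY i) t).trans (hq i))

end

theorem stmt11_general {Ω : Type*} [MeasurableSpace Ω] (μ : Measure Ω) [IsProbabilityMeasure μ]
    (T : ℕ)
    (p : ℝ) (hp : 0 < p) (hTp : (T : ℝ) * p < 1)
    (Tb : Fin T → Ω → ℕ) (hmeas : ∀ b, Measurable (Tb b))
    (hindep : iIndepFun Tb μ)
    (hgeom : ∀ b : Fin T, ∀ k : ℕ, 1 ≤ k →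
      μ {ω | Tb b ω = k} = ENNReal.ofReal (p * (1 - p) ^ (k - 1)))
    (hTb1 : ∀ b, ∀ᵐ ω ∂μ, 1 ≤ Tb b ω) :
    ∀ t ∈ Finset.Icc 2 T,
      (∫ ω, (∑ b : Fin T, if Tb b ω < t then (1 : ℝ) else 0) ∂μ
          = (T : ℝ) * (1 - (1 - p) ^ (t - 1))) ∧
      (variance (fun ω => ∑ b : Fin T, if Tb b ω < t then (1 : ℝ) else 0) μ
          = (T : ℝ) * (1 - (1 - p) ^ (t - 1)) * (1 - p) ^ (t - 1)) ∧
      (0 < (t : ℝ) - (T : ℝ) * (1 - (1 - p) ^ (t - 1))) ∧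
      ((μ {ω | (t : ℕ) - 1 <
            (Finset.univ.filter (fun b : Fin T => Tb b ω < t)).card}).toReal
        ≤ (T : ℝ) * p * (1 - ((t : ℝ) - 1) * p)
            / (((t : ℝ) - 1) * (1 - (T : ℝ) * p) ^ 2)) := by
  intro t ht
  obtain ⟨ht2, htT⟩ := Finset.mem_Icc.mp ht
  have ht2' : (2 : ℝ) ≤ t := by exact_mod_cast ht2
  have htT' : (t : ℝ) ≤ T := by exact_mod_cast htT
  have hp1 : p ≤ 1 := by nlinarith
  set q := 1 - (1 - p) ^ (t - 1)
  have hq : ∀ b, μ.real {ω | Tb b ω < t} = q := fun b => by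
    rw [measureReal_def, measure_lt_eq_of_geometric (hmeas b) (hTb1 b) hp.le hp1 (hgeom b),
      ENNReal.toReal_ofReal (sub_nonneg.2 (pow_le_one₀ (by linarith) (by linarith)))]
  have hqn : q ≤ ((t : ℝ) - 1) * p := by
    have := one_sub_one_sub_pow_le_mul (by linarith) (t - 1)
    rwa [Nat.cast_sub (by omega), Nat.cast_one] at this
  have hmean := integral_sum_ite_lt hmeas hq
  have hvar := variance_sum_ite_lt hmeas hindep hq
  rw [Fintype.card_fin] at hmean hvar
  have hgap : 0 < (t : ℝ) - T * q := by nlinarith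
  refine ⟨hmean, by rw [hvar]; ring, hgap, ?_⟩
  calc μ.real _ ≤ _ / (t - ∫ ω, ∑ b, (if Tb b ω < t then (1 : ℝ) else 0) ∂μ) ^ 2 := by
        refine measureReal_le_variance_div_sq
          (memLp_finsetSum _ fun b _ => memLp_ite_lt (hmeas b) t) (by linarith) fun ω hω => ?_
        simp only [Set.mem_ofPred_eq] at hω
        rw [Finset.sum_boole]
        exact_mod_cast (show t ≤ _ by omega)
    _ ≤ _ := by
      rw [hvar, hmean]
      have := chebyshev_ratio_le (n := (t : ℝ) - 1) (by linarith) (by linarith) hp hTp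
        (sub_le_self _ (pow_nonneg (by linarith) _)) hqn
      rwa [sub_add_cancel] at this

/-- Suppose `Tb 1, …, Tb T` are i.i.d. `Geometric(p)` perishing times
(`P(Tb b = k) = p (1−p)^{k−1}` for `k ≥ 1`) with `0 < p` and `T·p < 1`, `T ≥ 2`, and
`P_{<t} = Σ_b 1{Tb b < t}`. Then for every `t ∈ {2,…,T}`:
`E[P_{<t}] = T(1 − (1−p)^{t−1})`, `Var(P_{<t}) = T(1 − (1−p)^{t−1})(1−p)^{t−1}`,
`t − E[P_{<t}] > 0`, and `P(P_{<t} > t − 1) ≤ Tp(1 − (t−1)p)/((t−1)(1 − Tp)²)`. -/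
theorem stmt11 {Ω : Type*} [MeasurableSpace Ω] (μ : Measure Ω) [IsProbabilityMeasure μ]
    (T : ℕ) (hT : 2 ≤ T)
    (p : ℝ) (hp : 0 < p) (hTp : (T : ℝ) * p < 1)
    (Tb : Fin T → Ω → ℕ) (hmeas : ∀ b, Measurable (Tb b))
    (hindep : iIndepFun Tb μ)
    (hgeom : ∀ b : Fin T, ∀ k : ℕ, 1 ≤ k →
      μ {ω | Tb b ω = k} = ENNReal.ofReal (p * (1 - p) ^ (k - 1)))
    (hTb1 : ∀ b, ∀ᵐ ω ∂μ, 1 ≤ Tb b ω) :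
    ∀ t ∈ Finset.Icc 2 T,
      (∫ ω, (∑ b : Fin T, if Tb b ω < t then (1 : ℝ) else 0) ∂μ
          = (T : ℝ) * (1 - (1 - p) ^ (t - 1))) ∧
      (variance (fun ω => ∑ b : Fin T, if Tb b ω < t then (1 : ℝ) else 0) μ
          = (T : ℝ) * (1 - (1 - p) ^ (t - 1)) * (1 - p) ^ (t - 1)) ∧
      (0 < (t : ℝ) - (T : ℝ) * (1 - (1 - p) ^ (t - 1))) ∧
      ((μ {ω | (t : ℕ) - 1 <
            (Finset.univ.filter (fun b : Fin T => Tb b ω < t)).card}).toReal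
        ≤ (T : ℝ) * p * (1 - ((t : ℝ) - 1) * p)
            / (((t : ℝ) - 1) * (1 - (T : ℝ) * p) ^ 2)) :=
  stmt11_general μ T p hp hTp Tb hmeas hindep hgeom hTb1
end

section
/- Suppose T_1,...,T_T are i.i.d. Geometric(p) random variables (0 < p, T·p < 1), demand is deterministic with one arrival per round (so cumulative arrivals through round t equal t and N̄ = T), T ≥ 2, and δ ∈ (0,1). Then for any allocation schedule σ (any bijection of {1,...,T}), the maximal feasible static allocation X̲ = sup{X ≥ 0 : X ≤ (T − Δ̄(X))/T} satisfies X̲ ≥ 1 − 3 T p − log(3 log(T)/δ)/T. Consequently the perishing-induced loss ℒ^perish = 1 − X̲ satisfies ℒ^perish ≤ 3 T p + log(3 log(T)/δ)/T. -/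
open MeasureTheory ProbabilityTheory Finset

/-- Worst-case expected spoilage under the static allocation `X`:
`μX(X) = Σ_b P(Tb b < min{T, τ_b(1 ∣ X, σ)})`, where `τ_b(1 ∣ X, σ) = ⌈σ(b)/X⌉` is the
latest possible allocation time of unit `b` (one deterministic arrival per round). -/
noncomputable def muX {Ω : Type*} [MeasurableSpace Ω] (μ : Measure Ω) (T : ℕ)
    (rank : Fin T → ℕ) (Tb : Fin T → Ω → ℕ) (X : ℝ) : ℝ :=
  ∑ b : Fin T, (μ {ω | Tb b ω < min T ⌈(rank b : ℝ) / X⌉₊}).toReal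

/-- The confidence term `Conf^P_1(m) = (1/2)(log(3 log T/δ) + √(log²(3 log T/δ) + 8 m log(3 log T/δ)))`. -/
noncomputable def confP (T : ℕ) (δ m : ℝ) : ℝ :=
  (1 / 2) * (Real.log (3 * Real.log T / δ) +
    Real.sqrt ((Real.log (3 * Real.log T / δ)) ^ 2 + 8 * m * Real.log (3 * Real.log T / δ)))

/-- The worst-case perishing loss `Δ̄(X) = min{B, μX(X) + Conf^P_1(μX(X))}` (here `B = T`). -/
noncomputable def deltaBar {Ω : Type*} [MeasurableSpace Ω] (μ : Measure Ω) (T : ℕ)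
    (rank : Fin T → ℕ) (Tb : Fin T → Ω → ℕ) (δ X : ℝ) : ℝ :=
  min (T : ℝ) (muX μ T rank Tb X + confP T δ (muX μ T rank Tb X))

/-- The maximal feasible static allocation
`X̲ = sup{X ≥ 0 ∣ X ≤ (T − Δ̄(X))/T}` (with `B = T` and `N̄ = T`). -/
noncomputable def Xlower {Ω : Type*} [MeasurableSpace Ω] (μ : Measure Ω) (T : ℕ)
    (rank : Fin T → ℕ) (Tb : Fin T → Ω → ℕ) (δ : ℝ) : ℝ :=
  sSup {X : ℝ | 0 ≤ X ∧ X ≤ ((T : ℝ) - deltaBar μ T rank Tb δ X) / (T : ℝ)}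

/-! A unit can only spoil before the horizon if its geometric lifetime is below `T`, and each
value of a `Geometric(p)` variable has mass at most `p`, so every term of `μ(X)` is at most `Tp`
and `μ(X) ≤ T²p` whatever `X` and `σ`. Since `√(L² + 8mL) ≤ L + 4m` for `L, m ≥ 0`, the
confidence term is at most `L + 2m`, hence `Δ̄(X) ≤ L + 3T²p` uniformly in `X`; then the
allocation `1 − 3Tp − L/T` is feasible (or negative, and `0` is feasible). -/

section Spoilage

variable {Ω : Type*} [MeasurableSpace Ω] {μ : Measure Ω}

theorem measure_lt_le_mul_of_forall_measure_eq_le {f : Ω → ℕ} {c : ENNReal}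
    (h : ∀ k, μ {ω | f ω = k} ≤ c) (n : ℕ) : μ {ω | f ω < n} ≤ n * c :=
  calc μ {ω | f ω < n} = μ (⋃ k ∈ range n, {ω | f ω = k}) := by
        congr 1; ext ω; simp
    _ ≤ ∑ k ∈ range n, μ {ω | f ω = k} := measure_biUnion_finset_le _ _
    _ ≤ ∑ _k ∈ range n, c := sum_le_sum fun k _ => h k
    _ = n * c := by rw [sum_const, card_range, nsmul_eq_mul]

theorem measure_eq_le_of_geometric {f : Ω → ℕ} {p : ℝ} (hp : 0 ≤ p) (hp1 : p ≤ 1)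
    (hgeom : ∀ k : ℕ, 1 ≤ k → μ {ω | f ω = k} = ENNReal.ofReal (p * (1 - p) ^ (k - 1)))
    (hpos : ∀ᵐ ω ∂μ, 1 ≤ f ω) (k : ℕ) : μ {ω | f ω = k} ≤ ENNReal.ofReal p := by
  rcases Nat.eq_zero_or_pos k with rfl | hk
  · have hnull : μ {ω | f ω = 0} = 0 :=
      measure_mono_null (fun ω (hω : f ω = 0) => by simp [hω]) (ae_iff.mp hpos)
    simp [hnull]
  · rw [hgeom k hk]
    exact ENNReal.ofReal_le_ofReal
      (mul_le_of_le_one_right hp (pow_le_one₀ (by linarith) (by linarith)))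

theorem muX_nonneg (T : ℕ) (rank : Fin T → ℕ) (Tb : Fin T → Ω → ℕ) (X : ℝ) :
    0 ≤ muX μ T rank Tb X :=
  sum_nonneg fun _ _ => ENNReal.toReal_nonneg

theorem muX_le_of_forall_measure_lt_le {T : ℕ} (rank : Fin T → ℕ) {Tb : Fin T → Ω → ℕ}
    {c : ℝ} (hc : 0 ≤ c) (h : ∀ b, μ {ω | Tb b ω < T} ≤ ENNReal.ofReal c) (X : ℝ) :
    muX μ T rank Tb X ≤ T * c :=
  calc muX μ T rank Tb X ≤ ∑ _b : Fin T, c :=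
        sum_le_sum fun b _ => ENNReal.toReal_le_of_le_ofReal hc <|
          (measure_mono fun ω (hω : Tb b ω < _) => lt_min_iff.mp hω |>.1).trans (h b)
    _ = T * c := by simp

end Spoilage

section Confidence

theorem log_three_log_div_nonneg {T : ℕ} (hT : 2 ≤ T) {δ : ℝ} (hδ0 : 0 < δ) (hδ1 : δ ≤ 1) :
    0 ≤ Real.log (3 * Real.log T / δ) := by
  have hlogT : Real.log 2 ≤ Real.log T := Real.log_le_log two_pos (by exact_mod_cast hT)
  refine Real.log_nonneg ((one_le_div hδ0).mpr ?_)
  linarith [Real.log_two_gt_d9]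

variable {T : ℕ} {δ m : ℝ}

theorem confP_nonneg (hL : 0 ≤ Real.log (3 * Real.log T / δ)) : 0 ≤ confP T δ m := by
  unfold confP
  have := Real.sqrt_nonneg ((Real.log (3 * Real.log T / δ)) ^ 2
    + 8 * m * Real.log (3 * Real.log T / δ))
  linarith

theorem confP_le (hL : 0 ≤ Real.log (3 * Real.log T / δ)) (hm : 0 ≤ m) :
    confP T δ m ≤ Real.log (3 * Real.log T / δ) + 2 * m := by
  set L := Real.log (3 * Real.log T / δ)
  have hsqrt : Real.sqrt (L ^ 2 + 8 * m * L) ≤ L + 4 * m :=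
    Real.sqrt_le_iff.mpr ⟨by linarith, by nlinarith⟩
  change (1 / 2) * (L + Real.sqrt (L ^ 2 + 8 * m * L)) ≤ L + 2 * m
  linarith

end Confidence

section Feasibility

theorem one_sub_div_le_sSup_feasible {T K : ℝ} (hT : 0 < T) {D : ℝ → ℝ}
    (hD0 : ∀ X, 0 ≤ D X) (hDT : D 0 ≤ T) (hDK : ∀ X, D X ≤ K) :
    1 - K / T ≤ sSup {X : ℝ | 0 ≤ X ∧ X ≤ (T - D X) / T} := by
  have hbdd : BddAbove {X : ℝ | 0 ≤ X ∧ X ≤ (T - D X) / T} :=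
    ⟨1, fun X hX => hX.2.trans ((div_le_one hT).mpr (by linarith [hD0 X]))⟩
  rcases le_or_gt (1 - K / T) 0 with hneg | hpos
  · exact hneg.trans (le_csSup hbdd ⟨le_rfl, div_nonneg (by linarith) hT.le⟩)
  · refine le_csSup hbdd ⟨hpos.le, ?_⟩
    have := div_le_div_of_nonneg_right (hDK (1 - K / T)) hT.le
    rw [sub_div, div_self hT.ne']
    linarith

variable {Ω : Type*} [MeasurableSpace Ω] {μ : Measure Ω} {T : ℕ} {rank : Fin T → ℕ}
  {Tb : Fin T → Ω → ℕ} {δ : ℝ}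

theorem deltaBar_nonneg (hL : 0 ≤ Real.log (3 * Real.log T / δ)) (X : ℝ) :
    0 ≤ deltaBar μ T rank Tb δ X :=
  le_min T.cast_nonneg (add_nonneg (muX_nonneg T rank Tb X) (confP_nonneg hL))

theorem deltaBar_le_of_muX_le (hL : 0 ≤ Real.log (3 * Real.log T / δ)) {M X : ℝ}
    (hM : muX μ T rank Tb X ≤ M) :
    deltaBar μ T rank Tb δ X ≤ Real.log (3 * Real.log T / δ) + 3 * M := by
  have := confP_le (δ := δ) hL (muX_nonneg (μ := μ) T rank Tb X)
  exact (min_le_right _ _).trans (by linarith)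

theorem one_sub_div_le_Xlower (hT : 0 < T) (hL : 0 ≤ Real.log (3 * Real.log T / δ)) {M : ℝ}
    (hM : ∀ X, muX μ T rank Tb X ≤ M) :
    1 - (Real.log (3 * Real.log T / δ) + 3 * M) / T ≤ Xlower μ T rank Tb δ :=
  one_sub_div_le_sSup_feasible (by exact_mod_cast hT) (deltaBar_nonneg hL)
    (min_le_left _ _) fun X => deltaBar_le_of_muX_le hL (hM X)

end Feasibility

theorem stmt12_general {Ω : Type*} [MeasurableSpace Ω] (μ : Measure Ω)
    (T : ℕ) (hT : 2 ≤ T)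
    (p : ℝ) (hp : 0 < p) (hTp : (T : ℝ) * p < 1)
    (δ : ℝ) (hδ : δ ∈ Set.Ioo (0 : ℝ) 1)
    (Tb : Fin T → Ω → ℕ)
    (hgeom : ∀ b : Fin T, ∀ k : ℕ, 1 ≤ k →
      μ {ω | Tb b ω = k} = ENNReal.ofReal (p * (1 - p) ^ (k - 1)))
    (hTb1 : ∀ b, ∀ᵐ ω ∂μ, 1 ≤ Tb b ω)
    (σ : Equiv.Perm (Fin T)) :
    1 - 3 * (T : ℝ) * p - Real.log (3 * Real.log T / δ) / (T : ℝ)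
        ≤ Xlower μ T (fun b => (σ b : ℕ) + 1) Tb δ ∧
    1 - Xlower μ T (fun b => (σ b : ℕ) + 1) Tb δ
        ≤ 3 * (T : ℝ) * p + Real.log (3 * Real.log T / δ) / (T : ℝ) := by
  have hTpos : (0 : ℝ) < T := by exact_mod_cast (by omega : 0 < T)
  have hp1 : p ≤ 1 := by
    nlinarith [mul_le_mul_of_nonneg_right (by exact_mod_cast hT : (2 : ℝ) ≤ T) hp.le]
  have hspoil (b : Fin T) : μ {ω | Tb b ω < T} ≤ ENNReal.ofReal (T * p) := by
    rw [ENNReal.ofReal_mul hTpos.le, ENNReal.ofReal_natCast]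
    exact measure_lt_le_mul_of_forall_measure_eq_le
      (measure_eq_le_of_geometric hp.le hp1 (hgeom b) (hTb1 b)) T
  have hXlower := one_sub_div_le_Xlower (by omega)
    (log_three_log_div_nonneg hT hδ.1 hδ.2.le)
    (muX_le_of_forall_measure_lt_le (fun b => (σ b : ℕ) + 1) (by positivity) hspoil)
  have hrhs : 1 - (Real.log (3 * Real.log T / δ) + 3 * (T * (T * p))) / T
      = 1 - 3 * (T : ℝ) * p - Real.log (3 * Real.log T / δ) / T := by
    field_simp
    ring
  rw [hrhs] at hXlower
  exact ⟨hXlower, by linarith⟩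

/-- For i.i.d. `Geometric(p)` perishing times (`0 < p`, `T·p < 1`),
deterministic demand of one arrival per round, `T ≥ 2` and `δ ∈ (0,1)`: for every allocation
schedule `σ` (a bijection of `{1,…,T}`, here `rank b = σ(b) = (σ b) + 1`), the maximal
feasible static allocation satisfies `X̲ ≥ 1 − 3Tp − log(3 log T/δ)/T`; consequently the
perishing-induced loss `ℒ^perish = 1 − X̲` is at most `3Tp + log(3 log T/δ)/T`. -/
theorem stmt12 {Ω : Type*} [MeasurableSpace Ω] (μ : Measure Ω) [IsProbabilityMeasure μ]
    (T : ℕ) (hT : 2 ≤ T)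
    (p : ℝ) (hp : 0 < p) (hTp : (T : ℝ) * p < 1)
    (δ : ℝ) (hδ : δ ∈ Set.Ioo (0 : ℝ) 1)
    (Tb : Fin T → Ω → ℕ) (hmeas : ∀ b, Measurable (Tb b))
    (hindep : iIndepFun Tb μ)
    (hgeom : ∀ b : Fin T, ∀ k : ℕ, 1 ≤ k →
      μ {ω | Tb b ω = k} = ENNReal.ofReal (p * (1 - p) ^ (k - 1)))
    (hTb1 : ∀ b, ∀ᵐ ω ∂μ, 1 ≤ Tb b ω)
    (σ : Equiv.Perm (Fin T)) :
    1 - 3 * (T : ℝ) * p - Real.log (3 * Real.log T / δ) / (T : ℝ)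
        ≤ Xlower μ T (fun b => (σ b : ℕ) + 1) Tb δ ∧
    1 - Xlower μ T (fun b => (σ b : ℕ) + 1) Tb δ
        ≤ 3 * (T : ℝ) * p + Real.log (3 * Real.log T / δ) / (T : ℝ) :=
  stmt12_general μ T hT p hp hTp δ hδ Tb hgeom hTb1 σ
end

section
/- Consider two runs of the ordered allocation dynamics that share the same unit set, allocation order σ, and perishing times (T_b), but use per-round total allocation quantities A_t and A'_t respectively, with A_t ≥ A'_t for every round t. Then for every round t and every unit b, the remaining quantities satisfy q_t(b) ≤ q'_t(b) — in particular, the set of units with positive remaining quantity in the first run is contained in that of the second — and the spoiled quantities satisfy PUA_t ≤ PUA'_t for every t. (This yields the paper's Lemma: the set of items remaining under the guardrail algorithm, which allocates at least N_t·X̲ per round, is contained in the set remaining under the static-X̲ process, and its per-round perished-unallocated quantity is dominated.) -/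
open Finset

/-- The quantity of unallocated stock that spoils at the end of round `t`:
the post-allocation remaining quantity of all units with `Tb b = t`. -/
noncomputable def spoiledQty {ι : Type*} [Fintype ι] (rank : ι → ℕ) (Tb : ι → ℕ)
    (A : ℕ → ℝ) (t : ℕ) : ℝ :=
  ∑ b ∈ Finset.univ.filter (fun b => Tb b = t),
    allocRemain rank (stockState rank Tb A t) (A t) b

/-- Consider two runs of the ordered allocation dynamics sharing the same
units, allocation order `rank` and perishing times `Tb`, with per-round total allocation
amounts `A t ≥ A' t ≥ 0`. Then at every round the remaining quantities of the first run are
dominated by those of the second (`q_t(b) ≤ q'_t(b)`); in particular every unit with positive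
remaining quantity in the first run has positive remaining quantity in the second; and the
spoiled quantities satisfy `PUA_t ≤ PUA'_t` for every round `t`. -/
theorem stmt14 {ι : Type*} [Fintype ι] (rank : ι → ℕ) (hrank : Function.Injective rank)
    (Tb : ι → ℕ) (hTb1 : ∀ b, 1 ≤ Tb b)
    (A A' : ℕ → ℝ) (hA0 : A 0 = 0) (hA'0 : A' 0 = 0)
    (hnn : ∀ t, 0 ≤ A' t) (hdom : ∀ t, A' t ≤ A t) :
    (∀ t b, stockState rank Tb A t b ≤ stockState rank Tb A' t b) ∧
    (∀ t b, 0 < stockState rank Tb A t b → 0 < stockState rank Tb A' t b) ∧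
    (∀ t, spoiledQty rank Tb A t ≤ spoiledQty rank Tb A' t) := by
  have emax : ∀ a m : ℝ, a - min a m = max (a - m) 0 := by
    intro a m
    rcases le_total a m with h | h
    · simp [min_eq_left h, max_eq_right (sub_nonpos.mpr h)]
    · simp [min_eq_right h, max_eq_left (sub_nonneg.mpr h)]
  have key : ∀ (q q' : ι → ℝ) (a a' : ℝ), (∀ b, q b ≤ q' b) → a' ≤ a →
      ∀ b, allocRemain rank q a b ≤ allocRemain rank q' a' b := by
    intro q q' a a' hq haa b
    unfold allocRemain
    have hS : ∑ b' ∈ Finset.univ.filter (fun b' => rank b' < rank b), q b' ≤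
        ∑ b' ∈ Finset.univ.filter (fun b' => rank b' < rank b), q' b' :=
      Finset.sum_le_sum fun i _ => hq i
    rw [emax, emax]
    have h1 : max 0 (a' - ∑ b' ∈ Finset.univ.filter (fun b' => rank b' < rank b), q' b')
        ≤ max 0 (a - ∑ b' ∈ Finset.univ.filter (fun b' => rank b' < rank b), q b') :=
      max_le_max le_rfl (by linarith)
    exact max_le_max (by have := hq b; linarith) le_rfl
  have hle : ∀ t b, stockState rank Tb A t b ≤ stockState rank Tb A' t b := by
    intro t
    induction t with
    | zero => intro b; simp [stockState]
    | succ t ih =>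
      intro b
      simp only [stockState]
      split
      · exact le_rfl
      · exact key _ _ _ _ ih (hdom t) b
  refine ⟨hle, fun t b h => lt_of_lt_of_le h (hle t b), fun t => ?_⟩
  unfold spoiledQty
  exact Finset.sum_le_sum fun b _ => key _ _ _ _ (hle t) (hdom t) b
end

section
/- Consider a run of the ordered allocation dynamics with order σ and perishing times (T_b), and let X̲ > 0 and nonnegative numbers (n̲_t) be such that the cumulative allocated quantity through the end of each round t' is at least n̲_{≤t'}·X̲, where n̲_{≤t'} = Σ_{s≤t'} n̲_s. Then: (i) every unit b with positive remaining quantity at the start of round t satisfies σ(b) > n̲_{<t}·X̲ (so the remaining set is contained in B̄_t = {b : σ(b) ≥ ⌈n̲_{<t}·X̲⌉}); and (ii) if a unit b spoils with positive remaining quantity at the end of round T_b, where t ≤ T_b ≤ T−1, then T_b < τ_b(t | X̲, σ) := inf{t' ≥ t : n̲_{≤t'}·X̲ ≥ σ(b)}. In other words, t ≤ T_b < min{T, τ_b(t | X̲, σ)} is a necessary condition for unit b to perish unallocated at a time ≥ t. -/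
open Finset

/-- Total quantity actually allocated in round `t` of the dynamics. -/
noncomputable def allocatedQty {ι : Type*} [Fintype ι] (rank : ι → ℕ) (Tb : ι → ℕ)
    (A : ℕ → ℝ) (t : ℕ) : ℝ :=
  ∑ b, (stockState rank Tb A t b - allocRemain rank (stockState rank Tb A t) (A t) b)

section Aux

variable {ι : Type*} [Fintype ι]

lemma allocRemain_nonneg (rank : ι → ℕ) (q : ι → ℝ) (A : ℝ) (b : ι) :
    0 ≤ allocRemain rank q A b := by
  unfold allocRemain
  have := min_le_left (q b)
    (max 0 (A - ∑ b' ∈ Finset.univ.filter (fun b' => rank b' < rank b), q b'))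
  linarith

lemma allocRemain_le (rank : ι → ℕ) (q : ι → ℝ) (A : ℝ) (b : ι) (hb : 0 ≤ q b) :
    allocRemain rank q A b ≤ q b := by
  unfold allocRemain
  have h0 : (0:ℝ) ≤ max 0 (A - ∑ b' ∈ Finset.univ.filter (fun b' => rank b' < rank b), q b') :=
    le_max_left _ _
  have := le_min hb h0
  linarith

lemma allocRemain_eq_of_rank_gt [DecidableEq ι] (rank : ι → ℕ) (q : ι → ℝ) (A : ℝ)
    (hq : ∀ x, 0 ≤ q x) {b b' : ι}
    (hpos : 0 < allocRemain rank q A b) (hr : rank b < rank b') :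
    allocRemain rank q A b' = q b' := by
  unfold allocRemain at hpos ⊢
  set S := ∑ x ∈ Finset.univ.filter (fun x => rank x < rank b), q x with hS
  have h1 : max 0 (A - S) < q b := by
    by_contra h
    push_neg at h
    rw [min_eq_left h] at hpos
    linarith
  have hA : A - S < q b := lt_of_le_of_lt (le_max_right _ _) h1
  have hsub : insert b (Finset.univ.filter (fun x => rank x < rank b))
      ⊆ Finset.univ.filter (fun x => rank x < rank b') := by
    intro x hx
    simp only [Finset.mem_insert, Finset.mem_filter, Finset.mem_univ, true_and] at hx ⊢
    rcases hx with rfl | hx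
    · exact hr
    · exact hx.trans hr
  have hbnot : b ∉ Finset.univ.filter (fun x => rank x < rank b) := by simp
  have hS' : q b + S ≤ ∑ x ∈ Finset.univ.filter (fun x => rank x < rank b'), q x := by
    rw [hS, ← Finset.sum_insert hbnot]
    exact Finset.sum_le_sum_of_subset_of_nonneg hsub (fun x _ _ => hq x)
  have hneg : A - ∑ x ∈ Finset.univ.filter (fun x => rank x < rank b'), q x ≤ 0 := by
    linarith
  rw [max_eq_left hneg, min_eq_right (hq b')]
  ring

variable (rank : ι → ℕ) (Tb : ι → ℕ) (A : ℕ → ℝ)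

lemma stock_nonneg : ∀ t b, 0 ≤ stockState rank Tb A t b
  | 0, b => zero_le_one
  | t+1, b => by
      simp only [stockState]
      split
      · exact le_refl 0
      · exact allocRemain_nonneg _ _ _ _

lemma stock_succ_le (t : ℕ) (b : ι) :
    stockState rank Tb A (t+1) b ≤ allocRemain rank (stockState rank Tb A t) (A t) b := by
  simp only [stockState]
  split
  · exact allocRemain_nonneg _ _ _ _
  · exact le_refl _

lemma stock_antitone (b : ι) : Antitone (fun t => stockState rank Tb A t b) := by
  apply antitone_nat_of_succ_le
  intro t
  exact (stock_succ_le rank Tb A t b).trans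
    (allocRemain_le _ _ _ _ (stock_nonneg rank Tb A t b))

lemma stock_le_one (t : ℕ) (b : ι) : stockState rank Tb A t b ≤ 1 := by
  have := stock_antitone rank Tb A b (Nat.zero_le t)
  simpa [stockState] using this

/-- Telescoping bound on total taken from a single unit. -/
lemma taken_sum_le (b : ι) : ∀ u, 1 ≤ u →
    ∑ s ∈ Finset.Icc 1 u,
      (stockState rank Tb A s b - allocRemain rank (stockState rank Tb A s) (A s) b)
      ≤ stockState rank Tb A 1 b - allocRemain rank (stockState rank Tb A u) (A u) b := by
  intro u hu
  induction u, hu using Nat.le_induction with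
  | base => simp
  | succ u hu ih =>
      rw [Finset.sum_Icc_succ_top (by omega)]
      have h1 := stock_succ_le rank Tb A u b
      linarith

end Aux

section Key

variable {B : ℕ} (σ : Equiv.Perm (Fin B)) (Tb : Fin B → ℕ) (A : ℕ → ℝ)

lemma card_rank_lt (b : Fin B) :
    (Finset.univ.filter (fun b' : Fin B => (σ b' : ℕ) + 1 < (σ b : ℕ) + 1)).card
      = (σ b : ℕ) := by
  have h : Finset.univ.filter (fun b' : Fin B => (σ b' : ℕ) + 1 < (σ b : ℕ) + 1)
      = (Finset.Iio (σ b)).map σ.symm.toEmbedding := by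
    ext x
    simp only [Finset.mem_filter, Finset.mem_univ, true_and, Finset.mem_map,
      Finset.mem_Iio, Equiv.coe_toEmbedding]
    constructor
    · intro hx
      exact ⟨σ x, by exact Fin.lt_def.mpr (by omega), by simp⟩
    · rintro ⟨j, hj, rfl⟩
      simp only [Equiv.apply_symm_apply]
      have := Fin.lt_def.mp hj
      omega
  rw [h, Finset.card_map, Fin.card_Iio]

lemma key (b : Fin B) (u : ℕ) (hu : 1 ≤ u)
    (hpos : ∀ s, 1 ≤ s → s ≤ u →
      0 < allocRemain (fun b => (σ b : ℕ) + 1)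
            (stockState (fun b => (σ b : ℕ) + 1) Tb A s) (A s) b) :
    ∑ s ∈ Finset.Icc 1 u, allocatedQty (fun b => (σ b : ℕ) + 1) Tb A s
      < ((σ b : ℕ) + 1 : ℝ) := by
  set R : Fin B → ℕ := fun b => (σ b : ℕ) + 1 with hR
  set F : Fin B → ℝ := fun b' => ∑ s ∈ Finset.Icc 1 u,
      (stockState R Tb A s b' - allocRemain R (stockState R Tb A s) (A s) b') with hF
  have hswap : ∑ s ∈ Finset.Icc 1 u, allocatedQty R Tb A s = ∑ b', F b' := by
    rw [hF]
    rw [Finset.sum_comm]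
    rfl
  rw [hswap]
  -- bound each F
  have hFb : F b ≤ 1 - allocRemain R (stockState R Tb A u) (A u) b := by
    have := taken_sum_le R Tb A b u hu
    have h1 := stock_le_one R Tb A 1 b
    simp only [hF]
    linarith
  have hFlt : F b < 1 := lt_of_le_of_lt hFb (by linarith [hpos u hu le_rfl])
  have hFzero : ∀ b', R b < R b' → F b' = 0 := by
    intro b' hb'
    simp only [hF]
    apply Finset.sum_eq_zero
    intro s hs
    simp only [Finset.mem_Icc] at hs
    rw [allocRemain_eq_of_rank_gt R _ _ (stock_nonneg R Tb A s) (hpos s hs.1 hs.2) hb']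
    ring
  have hFle : ∀ b', 0 ≤ F b' ∧ F b' ≤ 1 := by
    intro b'
    constructor
    · apply Finset.sum_nonneg
      intro s _
      have := allocRemain_le R (stockState R Tb A s) (A s) b' (stock_nonneg R Tb A s b')
      linarith
    · have := taken_sum_le R Tb A b' u hu
      have h1 := stock_le_one R Tb A 1 b'
      have h2 := allocRemain_nonneg R (stockState R Tb A u) (A u) b'
      simp only [hF]
      linarith
  -- split the sum
  have hsplit : ∑ b', F b' = ∑ b' ∈ Finset.univ.erase b, F b' + F b :=
    (Finset.sum_erase_add _ _ (Finset.mem_univ b)).symm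
  have herase : ∑ b' ∈ Finset.univ.erase b, F b'
      ≤ ∑ b' ∈ Finset.univ.erase b, (if R b' < R b then (1:ℝ) else 0) := by
    apply Finset.sum_le_sum
    intro b' hb'
    by_cases h : R b' < R b
    · simp only [h, if_true]
      exact (hFle b').2
    · simp only [h, if_false]
      have hne : σ b' ≠ σ b := fun hc => (Finset.ne_of_mem_erase hb') (σ.injective hc)
      have : R b < R b' := by
        simp only [hR]
        have : (σ b' : ℕ) ≠ (σ b : ℕ) := fun hc => hne (Fin.ext hc)
        simp only [hR] at h
        omega
      rw [hFzero b' this]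
  have hcard : ∑ b' ∈ Finset.univ.erase b, (if R b' < R b then (1:ℝ) else 0)
      = ((σ b : ℕ) : ℝ) := by
    rw [Finset.sum_boole]
    rw [Finset.filter_erase]
    have hbnot : b ∉ Finset.univ.filter (fun b' : Fin B => R b' < R b) := by
      simp [hR]
    rw [Finset.erase_eq_of_notMem hbnot]
    exact_mod_cast congrArg (Nat.cast (R := ℝ)) (card_rank_lt σ b)
  rw [hsplit]
  calc ∑ b' ∈ Finset.univ.erase b, F b' + F b
      ≤ ((σ b : ℕ) : ℝ) + F b := by linarith [herase.trans_eq hcard]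
    _ < (σ b : ℕ) + 1 := by linarith
end Key

/-- Consider a run of the ordered allocation dynamics on `B` units with
bijective rank `σ(b) ∈ {1,…,B}` and perishing times `Tb`, and suppose the cumulative
allocated quantity through the end of each round `t'` is at least `n̲_{≤t'}·X̲` for
nonnegative `(n̲_s)` and `X̲ > 0`. Then (i) every unit `b` with positive remaining quantity at
the start of a round `t` satisfies `σ(b) > n̲_{<t}·X̲`; and (ii) if a unit `b` spoils with
positive remaining quantity at the end of round `Tb b` with `t ≤ Tb b ≤ T − 1`, then
`Tb b < τ_b(t ∣ X̲, σ) = inf{t' ≥ t : n̲_{≤t'}·X̲ ≥ σ(b)}`, i.e. `Tb b < t'` for every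
`t' ≥ t` with `n̲_{≤t'}·X̲ ≥ σ(b)`; so `t ≤ Tb b < min{T, τ_b(t ∣ X̲, σ)}` is necessary for
unit `b` to perish unallocated at a time `≥ t`. -/
theorem stmt15 (B T : ℕ) (hB : 1 ≤ B) (hT : 1 ≤ T)
    (σ : Equiv.Perm (Fin B)) (Tb : Fin B → ℕ) (hTb1 : ∀ b, 1 ≤ Tb b)
    (A : ℕ → ℝ) (hA0 : A 0 = 0) (hAnn : ∀ t, 0 ≤ A t)
    (n : ℕ → ℝ) (hn : ∀ s, 0 ≤ n s) (Xl : ℝ) (hXl : 0 < Xl)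
    (hcum : ∀ t' ∈ Finset.Icc 1 T,
      (∑ s ∈ Finset.Icc 1 t', n s) * Xl
        ≤ ∑ s ∈ Finset.Icc 1 t', allocatedQty (fun b => (σ b : ℕ) + 1) Tb A s) :
    (∀ t ∈ Finset.Icc 1 T, ∀ b : Fin B,
      0 < stockState (fun b => (σ b : ℕ) + 1) Tb A t b →
        (∑ s ∈ Finset.Ico 1 t, n s) * Xl < ((σ b : ℕ) + 1 : ℝ)) ∧
    (∀ b : Fin B, ∀ t : ℕ, 1 ≤ t → t ≤ Tb b → Tb b ≤ T - 1 →
      0 < allocRemain (fun b => (σ b : ℕ) + 1)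
            (stockState (fun b => (σ b : ℕ) + 1) Tb A (Tb b)) (A (Tb b)) b →
      ∀ t' : ℕ, t ≤ t' → ((σ b : ℕ) + 1 : ℝ) ≤ (∑ s ∈ Finset.Icc 1 t', n s) * Xl →
        Tb b < t') := by
  set R : Fin B → ℕ := fun b => (σ b : ℕ) + 1 with hR
  constructor
  · -- part (i)
    intro t ht b hb
    simp only [Finset.mem_Icc] at ht
    rcases Nat.lt_or_ge t 2 with h2 | h2
    · have ht1 : t = 1 := by omega
      subst ht1
      simp only [Finset.Ico_self, Finset.sum_empty, zero_mul]
      positivity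
    · set u := t - 1 with hu
      have htu : t = u + 1 := by omega
      have hu1 : 1 ≤ u := by omega
      have hpos : ∀ s, 1 ≤ s → s ≤ u →
          0 < allocRemain R (stockState R Tb A s) (A s) b := by
        intro s hs1 hsu
        have h1 := stock_succ_le R Tb A s b
        have h2 : stockState R Tb A t b ≤ stockState R Tb A (s+1) b :=
          stock_antitone R Tb A b (by omega)
        linarith
      have hkey := key σ Tb A b u hu1 hpos
      have hc := hcum u (Finset.mem_Icc.mpr ⟨hu1, by omega⟩)
      have hIco : Finset.Ico 1 t = Finset.Icc 1 u := by
        rw [htu, Finset.Ico_add_one_right_eq_Icc]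
      rw [hIco]
      exact lt_of_le_of_lt hc hkey
  · -- part (ii)
    intro b t ht1 htTb hTbT hpos0 t' htt' hle
    by_contra h
    push_neg at h
    have ht'Tb : t' ≤ Tb b := h
    have hstockTb : 0 < stockState R Tb A (Tb b) b := by
      have := allocRemain_le R (stockState R Tb A (Tb b)) (A (Tb b)) b
        (stock_nonneg R Tb A (Tb b) b)
      linarith
    have hpos : ∀ s, 1 ≤ s → s ≤ t' →
        0 < allocRemain R (stockState R Tb A s) (A s) b := by
      intro s hs1 hst'
      rcases Nat.lt_or_ge s (Tb b) with hlt | hge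
      · have h1 := stock_succ_le R Tb A s b
        have h2 : stockState R Tb A (Tb b) b ≤ stockState R Tb A (s+1) b :=
          stock_antitone R Tb A b (by omega)
        linarith
      · have : s = Tb b := by omega
        rw [this]
        exact hpos0
    have hkey := key σ Tb A b t' (by omega) hpos
    have hc := hcum t' (Finset.mem_Icc.mpr ⟨by omega, by omega⟩)
    linarith
end

section
/- Consider the guardrail process with parameters B, X̲ ≥ 0, L ≥ 0 (and X̄ = X̲ + L), future-demand bounds (M_t), and nonincreasing future-perishing bounds (P̄_t): B_1 = B, and in round t the per-individual allocation is X_t = B_t/N_t if B_t < N_t·X̲, X_t = X̄ if B_t − N_t·X̄ ≥ M_t·X̲ + P̄_t, and X_t = X̲ otherwise, with budget update B_{t+1} = B_t − N_t·X_t − PUA_t, where PUA_t ≥ 0 is the quantity of unallocated units spoiling at the end of round t. Suppose the sample path satisfies: (a) N ≤ N̄; (b) N_{>t} ≤ M_t for every t; (c) Σ_{τ ≥ t} PUA_τ ≤ P̄_t for every t ∈ {1,...,T}; and (d) B ≥ N̄·X̲ + P̄_1. Then B_t ≥ N_{≥t}·X̲ for every t ∈ {1,...,T}; in particular the process never runs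 out of budget and every round's per-individual allocation lies in {X̲, X̄}. -/
open Finset

/-- The per-individual allocation chosen by the guardrail rule in a round with current budget
`Bt`, arrivals `Nt`, future-demand bound `Mt` and future-perishing bound `Pbt`:
`Bt/Nt` if the budget cannot cover the lower guardrail `Xl`, the upper guardrail `Xu` if
`Bt − Nt·Xu ≥ Mt·Xl + Pbt`, and `Xl` otherwise. -/
noncomputable def guardX (Bt Nt Mt Pbt Xl Xu : ℝ) : ℝ :=
  if Bt < Nt * Xl then Bt / Nt
  else if Mt * Xl + Pbt ≤ Bt - Nt * Xu then Xu
  else Xl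

/-- Budget of the guardrail process at the start of round `t` (`guardB … 1 = B0`):
`B_{t+1} = B_t − N_t·X_t − PUA_t` where `X_t = guardX B_t N_t M_t P̄_t Xl Xu` and `PUA_t` is
the quantity of unallocated stock perishing at the end of round `t`. -/
noncomputable def guardB (B0 : ℝ) (N M Pb PUA : ℕ → ℝ) (Xl Xu : ℝ) : ℕ → ℝ
  | 0 => B0
  | 1 => B0
  | t + 2 =>
      guardB B0 N M Pb PUA Xl Xu (t + 1)
        - N (t + 1) * guardX (guardB B0 N M Pb PUA Xl Xu (t + 1)) (N (t + 1)) (M (t + 1))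
            (Pb (t + 1)) Xl Xu
        - PUA (t + 1)

/-- For the guardrail process with budget `B0`, guardrails `0 ≤ Xl` and
`Xu = Xl + L` (`L ≥ 0`), future-demand bounds `(M t)` and nonincreasing future-perishing
bounds `(P̄ t)`: if on the sample path (a) `N ≤ N̄`, (b) `N_{>t} ≤ M t` for all `t`,
(c) `Σ_{τ≥t} PUA τ ≤ P̄ t` for all `t ∈ {1,…,T}`, and (d) `B0 ≥ N̄·Xl + P̄ 1`, then
`B_t ≥ N_{≥t}·Xl` for every `t ∈ {1,…,T}`; in particular the process never runs out of
budget, and every round's per-individual allocation is `Xl` or `Xu`. -/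
theorem stmt16 (T : ℕ) (hT : 1 ≤ T)
    (N M Pb PUA : ℕ → ℝ) (hN : ∀ t ∈ Finset.Icc 1 T, 1 ≤ N t)
    (hPUAnn : ∀ t, 0 ≤ PUA t)
    (Xl L : ℝ) (hXl : 0 ≤ Xl) (hL : 0 ≤ L)
    (Nbar : ℝ) (B0 : ℝ)
    (hPbmono : ∀ t ∈ Finset.Icc 1 (T - 1), Pb (t + 1) ≤ Pb t)
    (ha : ∑ t ∈ Finset.Icc 1 T, N t ≤ Nbar)
    (hb : ∀ t ∈ Finset.Icc 1 T, ∑ s ∈ Finset.Icc (t + 1) T, N s ≤ M t)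
    (hc : ∀ t ∈ Finset.Icc 1 T, ∑ τ ∈ Finset.Icc t T, PUA τ ≤ Pb t)
    (hd : Nbar * Xl + Pb 1 ≤ B0) :
    (∀ t ∈ Finset.Icc 1 T,
      (∑ s ∈ Finset.Icc t T, N s) * Xl ≤ guardB B0 N M Pb PUA Xl (Xl + L) t) ∧
    (∀ t ∈ Finset.Icc 1 T,
      guardX (guardB B0 N M Pb PUA Xl (Xl + L) t) (N t) (M t) (Pb t) Xl (Xl + L) = Xl ∨
      guardX (guardB B0 N M Pb PUA Xl (Xl + L) t) (N t) (M t) (Pb t) Xl (Xl + L) = Xl + L) := by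
  set Xu := Xl + L with hXu
  set B := guardB B0 N M Pb PUA Xl Xu with hB
  have hsplitN : ∀ t, t ≤ T → ∀ f : ℕ → ℝ,
      ∑ s ∈ Finset.Icc t T, f s = f t + ∑ s ∈ Finset.Icc (t+1) T, f s := by
    intro t ht f
    rw [Finset.Icc_eq_cons_Ioc ht, Finset.sum_cons, Finset.Icc_add_one_left_eq_Ioc]
  -- key invariant
  have key : ∀ t, 1 ≤ t → t ≤ T →
      (∑ s ∈ Finset.Icc t T, N s) * Xl + ∑ τ ∈ Finset.Icc t T, PUA τ ≤ B t := by
    intro t ht1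
    induction t, ht1 using Nat.le_induction with
    | base =>
      intro _
      have h1 : (∑ s ∈ Finset.Icc 1 T, N s) * Xl ≤ Nbar * Xl :=
        mul_le_mul_of_nonneg_right ha hXl
      have h2 : ∑ τ ∈ Finset.Icc 1 T, PUA τ ≤ Pb 1 := hc 1 (by simp [hT])
      have : B 1 = B0 := rfl
      linarith
    | succ t ht1 IH =>
      intro htT1
      have htT : t ≤ T := by omega
      have hmem : t ∈ Finset.Icc 1 T := Finset.mem_Icc.2 ⟨ht1, htT⟩
      have hBt := IH htT
      have hNnn : ∀ s ∈ Finset.Icc t T, (0:ℝ) ≤ N s := fun s hs => by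
        have := hN s (Finset.mem_Icc.2 ⟨le_trans ht1 (Finset.mem_Icc.1 hs).1,
          (Finset.mem_Icc.1 hs).2⟩)
        linarith
      have hNle : N t ≤ ∑ s ∈ Finset.Icc t T, N s :=
        Finset.single_le_sum hNnn (Finset.mem_Icc.2 ⟨le_refl t, htT⟩)
      have hPUAsum : (0:ℝ) ≤ ∑ τ ∈ Finset.Icc t T, PUA τ :=
        Finset.sum_nonneg fun τ _ => hPUAnn τ
      have hNtXl : N t * Xl ≤ B t := by
        have := mul_le_mul_of_nonneg_right hNle hXl
        linarith
      -- recursion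
      obtain ⟨k, hk⟩ : ∃ k, t = k + 1 := ⟨t - 1, by omega⟩
      have hrec : B (t + 1) = B t - N t * guardX (B t) (N t) (M t) (Pb t) Xl Xu - PUA t := by
        rw [hk]; rfl
      have hsN := hsplitN t htT N
      have hsP := hsplitN t htT PUA
      rw [hrec, guardX, if_neg (not_lt.2 hNtXl)]
      by_cases hcase : M t * Xl + Pb t ≤ B t - N t * Xu
      · rw [if_pos hcase]
        have h1 : (∑ s ∈ Finset.Icc (t+1) T, N s) * Xl ≤ M t * Xl :=
          mul_le_mul_of_nonneg_right (hb t hmem) hXl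
        have h2 : ∑ τ ∈ Finset.Icc t T, PUA τ ≤ Pb t := hc t hmem
        linarith
      · rw [if_neg hcase]
        rw [hsN, hsP, add_mul] at hBt
        linarith
  constructor
  · intro t htm
    obtain ⟨h1, h2⟩ := Finset.mem_Icc.1 htm
    have := key t h1 h2
    have hPUAsum : (0:ℝ) ≤ ∑ τ ∈ Finset.Icc t T, PUA τ :=
      Finset.sum_nonneg fun τ _ => hPUAnn τ
    linarith
  · intro t htm
    obtain ⟨h1, h2⟩ := Finset.mem_Icc.1 htm
    have hBt := key t h1 h2
    have hNnn : ∀ s ∈ Finset.Icc t T, (0:ℝ) ≤ N s := fun s hs => by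
      have := hN s (Finset.mem_Icc.2 ⟨le_trans h1 (Finset.mem_Icc.1 hs).1,
        (Finset.mem_Icc.1 hs).2⟩)
      linarith
    have hNle : N t ≤ ∑ s ∈ Finset.Icc t T, N s :=
      Finset.single_le_sum hNnn (Finset.mem_Icc.2 ⟨le_refl t, h2⟩)
    have hPUAsum : (0:ℝ) ≤ ∑ τ ∈ Finset.Icc t T, PUA τ :=
      Finset.sum_nonneg fun τ _ => hPUAnn τ
    have hNtXl : N t * Xl ≤ B t := by
      have := mul_le_mul_of_nonneg_right hNle hXl
      linarith
    rw [guardX, if_neg (not_lt.2 hNtXl)]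
    by_cases hcase : M t * Xl + Pb t ≤ B t - N t * Xu
    · right; rw [if_pos hcase]
    · left; rw [if_neg hcase]
end
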